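/- arXiv:1411.5929 — 7 statements merged into one kernel-verified Lean document; each statement's English description precedes it below -/
import Mathlib

section
/- Let G be a finite abelian group of order n and F a number field. For each normal subgroup N of G with G/N cyclic of order k, and each orbit C of the faithful characters of G/N under Gal(F(ζ_k)/F), the element ε_C(G,N) = (1/|G|) Σ_{g∈G} Tr_{F(ζ_k)/F}(χ(gN)) g⁻¹ (for any χ ∈ C) is a primitive central idempotent of the group algebra FG, and FG·ε_C(G,N) ≅ F(ζ_k) as F-algebras. -/
/-! The character `χ` induces a surjection `φ : FG → F(ζ)` of `F`-algebras, and
`α ↦ |G|⁻¹ ∑_g Tr(α χ(g)) g⁻¹` is a section of `φ` that is `FG`-linear for the module structure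
given by `φ`. That it is a section is character orthogonality: in an algebraic closure the trace
becomes a sum over the `F`-embeddings `σ`, and since the values of `χ` generate `F(ζ)`, the
characters `σ ∘ χ` and `χ` differ unless `σ` is the inclusion. So `ε`, the image of `1`, satisfies
`φ ε = 1` and `(ker φ) ε = 0`, which makes `ε` a primitive central idempotent with
`FG / (1 - ε) = FG / ker φ ≅ F(ζ)`. -/

def IsPrimitiveCentralIdempotent {R : Type*} [Ring R] (e : R) : Prop :=
  e ≠ 0 ∧ e * e = e ∧ e ∈ Set.center R ∧
    ∀ f : R, f * f = f → f ∈ Set.center R → e * f = f → f = 0 ∨ f = e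

section PrimitiveIdempotent

variable {R K : Type*} [CommRing R] [CommRing K] (φ : R →+* K) {e : R}

theorem isPrimitiveCentralIdempotent_of_map_eq_one [IsDomain K] (he : φ e = 1)
    (hann : ∀ x, φ x = 0 → x * e = 0) : IsPrimitiveCentralIdempotent e := by
  have hidem : e * e = e := by
    simpa [sub_mul, sub_eq_zero] using hann (e - 1) (by simp [he])
  have hmul : ∀ x, φ x = 1 → x * e = e := fun x hx => by
    simpa [sub_mul, sub_eq_zero, hidem] using hann (x - e) (by simp [hx, he])
  refine ⟨fun h => by simp [h] at he, hidem, Set.center_eq_univ R ▸ trivial, ?_⟩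
  intro f hf _ hef
  rw [mul_comm] at hef
  rcases IsIdempotentElem.iff_eq_zero_or_one.mp (IsIdempotentElem.map hf φ) with h | h
  · exact .inl (hef ▸ hann f h)
  · exact .inr (hef ▸ hmul f h)

theorem ker_eq_span_one_sub_of_map_eq_one (he : φ e = 1)
    (hann : ∀ x, φ x = 0 → x * e = 0) : RingHom.ker φ = Ideal.span {1 - e} := by
  refine le_antisymm (fun x hx => Ideal.mem_span_singleton'.mpr ⟨x, ?_⟩) ?_
  · rw [mul_sub, mul_one, hann x hx, sub_zero]
  · rw [Ideal.span_le, Set.singleton_subset_iff, SetLike.mem_coe, RingHom.mem_ker, map_sub,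
      map_one, he, sub_self]

end PrimitiveIdempotent

theorem MonoidHom.sum_mul_map_inv {G R : Type*} [CommGroup G] [Fintype G] [CommRing R]
    [IsDomain R] [DecidableEq (G →* R)] (χ₁ χ₂ : G →* R) :
    ∑ g, χ₁ g * χ₂ g⁻¹ = if χ₁ = χ₂ then (Fintype.card G : R) else 0 := by
  split_ifs with h
  · simp [h, ← map_mul]
  · refine sum_hom_units_eq_zero (χ₁ * χ₂.comp invMonoidHom) fun h₁ => h ?_
    ext g
    simpa [mul_assoc, ← map_mul] using congr($h₁ g * χ₂ g)

open MonoidAlgebra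

section CharSection

variable {G F K : Type*} [CommGroup G] [Fintype G] [Field F] [Field K] [Algebra F K]
  (ψ : G →* K)

noncomputable def charSection : K →ₗ[F] MonoidAlgebra F G :=
  (Fintype.card G : F)⁻¹ •
    ∑ g : G, (lsingle g⁻¹).comp ((Algebra.trace F K).comp (LinearMap.mulRight F (ψ g)))

theorem charSection_apply (α : K) :
    charSection ψ α =
      (Fintype.card G : F)⁻¹ • ∑ g : G, single g⁻¹ (Algebra.trace F K (α * ψ g)) := by
  simp [charSection]

theorem single_mul_charSection (h : G) (c : F) (α : K) :
    single h c * charSection ψ α = charSection ψ (c • ψ h * α) := by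
  simp only [charSection_apply, Finset.mul_sum, mul_smul_comm, single_mul_single]
  congr 1
  refine Fintype.sum_equiv (Equiv.mulRight h⁻¹) _ _ fun g => ?_
  simp only [Equiv.coe_mulRight, mul_inv_rev, inv_inv, map_mul]
  have hh : ψ h * ψ h⁻¹ = 1 := by rw [← map_mul, mul_inv_cancel, map_one]
  rw [smul_mul_assoc, smul_mul_assoc, map_smul, smul_eq_mul]
  congr 3
  linear_combination -(α * ψ g) * hh

theorem mul_charSection (x : MonoidAlgebra F G) (α : K) :
    x * charSection ψ α = charSection ψ (lift F K G ψ x * α) := by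
  induction x using MonoidAlgebra.induction_linear with
  | zero => simp
  | add x y hx hy => rw [add_mul, hx, hy, map_add, add_mul, map_add]
  | single h c => rw [single_mul_charSection, lift_single]

theorem algHom_lift_charSection {L : Type*} [Field L] [Algebra F L] [IsAlgClosed L]
    [FiniteDimensional F K] [Algebra.IsSeparable F K]
    (hgen : Algebra.adjoin F (Set.range ψ) = ⊤) (hG : (Fintype.card G : F) ≠ 0)
    (ι : K →ₐ[F] L) (α : K) :
    ι (lift F K G ψ (charSection ψ α)) = ι α := by
  classical
  have hext (σ : K →ₐ[F] L) : (σ : K →* L).comp ψ = (ι : K →* L).comp ψ ↔ σ = ι :=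
    ⟨fun h => AlgHom.ext_of_adjoin_eq_top hgen (by rintro _ ⟨g, rfl⟩; exact congr($h g)),
      fun h => h ▸ rfl⟩
  have hGL : (Fintype.card G : L) ≠ 0 := by simpa using (algebraMap F L).injective.ne hG
  calc ι (lift F K G ψ (charSection ψ α))
      = (Fintype.card G : L)⁻¹ *
          ∑ g, algebraMap F L (Algebra.trace F K (α * ψ g)) * ι (ψ g⁻¹) := by
        simp [charSection_apply, lift_single, map_sum, Algebra.smul_def]
    _ = (Fintype.card G : L)⁻¹ *
          ∑ σ : K →ₐ[F] L, σ α * ∑ g, (σ : K →* L).comp ψ g * (ι : K →* L).comp ψ g⁻¹ := by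
        congr 1
        simp_rw [trace_eq_sum_embeddings L, Finset.sum_mul, Finset.mul_sum, map_mul, mul_assoc]
        exact Finset.sum_comm
    _ = (Fintype.card G : L)⁻¹ *
          ∑ σ : K →ₐ[F] L, σ α * if σ = ι then (Fintype.card G : L) else 0 := by
        simp_rw [MonoidHom.sum_mul_map_inv, hext]
    _ = ι α := by simp [mul_comm (ι α), hGL]

theorem lift_charSection [FiniteDimensional F K] [Algebra.IsSeparable F K]
    (hgen : Algebra.adjoin F (Set.range ψ) = ⊤) (hG : (Fintype.card G : F) ≠ 0) (α : K) :
    lift F K G ψ (charSection ψ α) = α :=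
  (IsScalarTower.toAlgHom F K (AlgebraicClosure K)).injective <|
    algHom_lift_charSection ψ hgen hG _ α

end CharSection

theorem exists_map_eq_of_injective {Q R : Type*} [Group Q] [Finite Q] [CommRing R] [IsDomain R]
    (f : Q →* R) (hf : Function.Injective f) {ζ : R} (hζ : IsPrimitiveRoot ζ (Nat.card Q)) :
    ∃ q, f q = ζ := by
  have := isCyclic_of_injective_ringHom f hf
  obtain ⟨c, hc⟩ := IsCyclic.exists_generator (α := Q)
  have hfc : IsPrimitiveRoot (f c) (Nat.card Q) := by
    rw [← orderOf_eq_card_of_forall_mem_zpowers hc, ← orderOf_injective f hf]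
    exact .orderOf _
  have : NeZero (Nat.card Q) := ⟨Nat.card_pos.ne'⟩
  obtain ⟨i, -, hi⟩ := hfc.eq_pow_of_pow_eq_one hζ.pow_eq_one
  exact ⟨c ^ i, by rw [map_pow, hi]⟩

open IntermediateField

theorem stmt3_general (G : Type*) [CommGroup G] [Fintype G]
    (F : IntermediateField ℚ ℂ)
    (N : Subgroup G) (k : ℕ) (hk : Nat.card (G ⧸ N) = k)
    (ζ : ℂ) (hζ : IsPrimitiveRoot ζ k)
    (χ : G →* ℂ) (hker : ∀ g : G, χ g = 1 ↔ g ∈ N)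
    (hmem : ∀ g : G, χ g ∈ IntermediateField.adjoin F {ζ}) :
    IsPrimitiveCentralIdempotent
      ((Fintype.card G : F)⁻¹ •
        ∑ g : G, MonoidAlgebra.single g⁻¹
          (Algebra.trace F (IntermediateField.adjoin F {ζ}) ⟨χ g, hmem g⟩)) ∧
    Nonempty
      ((MonoidAlgebra F G ⧸ Ideal.span {1 - (Fintype.card G : F)⁻¹ •
          ∑ g : G, MonoidAlgebra.single g⁻¹
            (Algebra.trace F (IntermediateField.adjoin F {ζ}) ⟨χ g, hmem g⟩)})
        ≃ₐ[F] (IntermediateField.adjoin F {ζ})) := by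
  let ψ : G →* F⟮ζ⟯ := χ.codRestrict F⟮ζ⟯ hmem
  have hN : N = χ.ker := Subgroup.ext fun g => (hker g).symm
  subst hk
  obtain ⟨q, hq⟩ := exists_map_eq_of_injective (QuotientGroup.lift N χ hN.le)
    ((QuotientGroup.injective_lift_iff _ _ _).mpr hN) hζ
  obtain ⟨g₀, rfl⟩ := QuotientGroup.mk_surjective q
  have hint : IsIntegral F ζ := (hζ.isIntegral Nat.card_pos).tower_top
  have : FiniteDimensional F F⟮ζ⟯ := adjoin.finiteDimensional hint
  have hgen : Algebra.adjoin F (Set.range ψ) = ⊤ :=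
    top_unique <| (adjoin.powerBasis hint).adjoin_gen_eq_top ▸
      Algebra.adjoin_mono (Set.singleton_subset_iff.mpr ⟨g₀, Subtype.ext hq⟩)
  have hG : (Fintype.card G : F) ≠ 0 := Nat.cast_ne_zero.mpr Fintype.card_ne_zero
  have he : MonoidAlgebra.lift F F⟮ζ⟯ G ψ (charSection ψ 1) = 1 := lift_charSection ψ hgen hG 1
  have hann (x) (hx : MonoidAlgebra.lift F F⟮ζ⟯ G ψ x = 0) : x * charSection ψ 1 = 0 := by
    rw [mul_charSection, hx, zero_mul, map_zero]
  have hε : charSection ψ 1 = (Fintype.card G : F)⁻¹ • ∑ g : G, MonoidAlgebra.single g⁻¹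
      (Algebra.trace F F⟮ζ⟯ ⟨χ g, hmem g⟩) := by
    simp [charSection_apply, ψ]
  rw [← hε]
  exact ⟨isPrimitiveCentralIdempotent_of_map_eq_one _ he hann,
    ⟨(Ideal.quotientEquivAlgOfEq F (ker_eq_span_one_sub_of_map_eq_one _ he hann).symm).trans
      (Ideal.quotientKerAlgEquivOfSurjective fun α => ⟨_, lift_charSection ψ hgen hG α⟩)⟩⟩

/-- for a finite abelian group `G`, a number field `F ⊆ ℂ`, a subgroup `N`
with `G/N` cyclic of order `k` and a faithful character `χ` of `G/N` (realized as a character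
of `G` with kernel `N`, with values in `F(ζ_k)`), the element
`ε_C(G,N) = (1/|G|) ∑_g Tr_{F(ζ_k)/F}(χ(gN)) g⁻¹` is a primitive central idempotent of `FG`
and `FG·ε_C(G,N) ≅ F(ζ_k)` as `F`-algebras. -/
theorem stmt3 (G : Type*) [CommGroup G] [Fintype G]
    (F : IntermediateField ℚ ℂ) [FiniteDimensional ℚ F]
    (N : Subgroup G) (k : ℕ) (hk : Nat.card (G ⧸ N) = k) (hcyc : IsCyclic (G ⧸ N))
    (ζ : ℂ) (hζ : IsPrimitiveRoot ζ k)
    (χ : G →* ℂ) (hker : ∀ g : G, χ g = 1 ↔ g ∈ N)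
    (hmem : ∀ g : G, χ g ∈ IntermediateField.adjoin F {ζ}) :
    IsPrimitiveCentralIdempotent
      ((Fintype.card G : F)⁻¹ •
        ∑ g : G, MonoidAlgebra.single g⁻¹
          (Algebra.trace F (IntermediateField.adjoin F {ζ}) ⟨χ g, hmem g⟩)) ∧
    Nonempty
      ((MonoidAlgebra F G ⧸ Ideal.span {1 - (Fintype.card G : F)⁻¹ •
          ∑ g : G, MonoidAlgebra.single g⁻¹
            (Algebra.trace F (IntermediateField.adjoin F {ζ}) ⟨χ g, hmem g⟩)})
        ≃ₐ[F] (IntermediateField.adjoin F {ζ})) :=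
  stmt3_general G F N k hk ζ hζ χ hker hmem
end

section
/- Let G be a finite group with a normal subgroup N such that G/N is cyclic of order k, and let F be a number field. Then for each Galois orbit C of faithful characters of G/N, the element ε_C(G,N) is a primitive central idempotent of FG with FG·ε_C(G,N) ≅ F(ζ_k). Moreover, for two orbits C and D, ε_C(G,N) = ε_D(G,N) if and only if C = D. -/
/-!
Over `E = F(ζ_k)` the trace idempotent splits as `ε = ∑_{σ ∈ Gal(E/F)} e_{σ ∘ χ}`, where the
`e_η = |G|⁻¹ ∑ η(g) g⁻¹` are orthogonal idempotents of `EG` with `x e_η = η(x) e_η`. Hence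
`x ε = 0` iff `χ(x) = 0`, so `FG ε ≅ FG / ker χ ≅ E` (the values of `χ` contain a primitive
`k`-th root of unity, which generates `E`) is a field and `ε` is primitive. Multiplying
`ε_χ = ε_ψ` by `e_ψ` shows that `ψ` lies in the Galois orbit of `χ`.
-/

set_option synthInstance.maxHeartbeats 1000000
set_option maxHeartbeats 1000000

open IntermediateField

theorem IsPrimitiveCentralIdempotent.of_ker {R K : Type*} [Ring R] [Ring K] [IsDomain K]
    (φ : R →+* K) {e : R} (he : IsIdempotentElem e) (hc : e ∈ Set.center R)
    (hker : ∀ x, φ x = 0 ↔ x * e = 0) : IsPrimitiveCentralIdempotent e := by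
  have hφe : φ e = 1 := by
    have : φ (1 - e) = 0 := (hker _).2 (by rw [sub_mul, one_mul, he.eq, sub_self])
    rwa [map_sub, map_one, sub_eq_zero, eq_comm] at this
  refine ⟨fun h => by simp [h] at hφe, he, hc, fun f hf _ hef => ?_⟩
  have hfe : f * e = f := (Semigroup.mem_center_iff.1 hc f).trans hef
  have hφf : IsIdempotentElem (φ f) := (show IsIdempotentElem f from hf).map φ
  rcases IsIdempotentElem.iff_eq_zero_or_one.1 hφf with h | h
  · exact .inl (hfe ▸ (hker f).1 h)
  · have := (hker (e - f)).1 (by rw [map_sub, hφe, h, sub_self])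
    rw [sub_mul, he.eq, hfe, sub_eq_zero] at this
    exact .inr this.symm

theorem MonoidHom.map_mul_map_inv {G M : Type*} [Group G] [Monoid M] (η : G →* M) (g : G) :
    η g * η g⁻¹ = 1 := by
  rw [← map_mul, mul_inv_cancel, map_one]

theorem MonoidHom.sum_apply_mul_apply_inv {G L : Type*} [Group G] [Fintype G] [Field L]
    [DecidableEq (G →* L)] (η η' : G →* L) :
    ∑ g : G, η g * η' g⁻¹ = if η = η' then (Fintype.card G : L) else 0 := by
  split_ifs with h
  · subst h
    simp only [map_mul_map_inv, Finset.sum_const, Finset.card_univ, nsmul_eq_mul, mul_one]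
  · let ρ : G →* L :=
      { toFun g := η g * η' g⁻¹
        map_one' := by simp
        map_mul' a b := by simp only [map_mul, mul_inv_rev]; ring }
    refine sum_hom_units_eq_zero ρ fun hρ => h (MonoidHom.ext fun g => ?_)
    calc η g = η g * η' g⁻¹ * η' g := by
          rw [mul_assoc, mul_comm (η' _), map_mul_map_inv, mul_one]
      _ = η' g := by rw [show η g * η' g⁻¹ = ρ g from rfl, hρ, MonoidHom.one_apply, one_mul]

namespace MonoidAlgebra

variable {G L : Type*} [Group G] [Fintype G] [Field L]

noncomputable def charIdempotent (η : G →* L) : MonoidAlgebra L G :=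
  (Fintype.card G : L)⁻¹ • ∑ g : G, single g⁻¹ (η g)

theorem single_mul_charIdempotent (η : G →* L) (h : G) (c : L) :
    single h c * charIdempotent η = (c * η h) • charIdempotent η := by
  rw [charIdempotent, mul_smul_comm, smul_comm (c * η h)]
  congr 1
  rw [Finset.mul_sum, Finset.smul_sum]
  refine Fintype.sum_equiv (Equiv.mulRight h⁻¹) _ _ fun g => ?_
  rw [single_mul_single, smul_single, Equiv.coe_mulRight, mul_inv_rev, inv_inv, map_mul,
    smul_eq_mul, mul_comm (η g), ← mul_assoc, mul_assoc c, MonoidHom.map_mul_map_inv, mul_one]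

theorem mul_charIdempotent (η : G →* L) (x : MonoidAlgebra L G) :
    x * charIdempotent η = lift L L G η x • charIdempotent η := by
  induction x using induction_linear with
  | zero => simp
  | add x y hx hy => rw [add_mul, hx, hy, map_add, add_smul]
  | single h c => rw [single_mul_charIdempotent, lift_single, smul_eq_mul]

theorem lift_charIdempotent [DecidableEq (G →* L)] (hG : (Fintype.card G : L) ≠ 0)
    (η η' : G →* L) : lift L L G η' (charIdempotent η) = if η = η' then 1 else 0 := by
  simp only [charIdempotent, map_smul, map_sum, lift_single, smul_eq_mul,
    MonoidHom.sum_apply_mul_apply_inv]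
  split_ifs <;> simp [hG]

theorem charIdempotent_mul_charIdempotent [DecidableEq (G →* L)]
    (hG : (Fintype.card G : L) ≠ 0) (η η' : G →* L) :
    charIdempotent η * charIdempotent η' = if η = η' then charIdempotent η' else 0 := by
  rw [mul_charIdempotent, lift_charIdempotent hG]
  split_ifs <;> simp

theorem coeff_charIdempotent_one (η : G →* L) :
    (charIdempotent η).coeff 1 = (Fintype.card G : L)⁻¹ := by
  classical
  simp [charIdempotent, coeff_sum, Finsupp.single_apply]

theorem charIdempotent_ne_zero (hG : (Fintype.card G : L) ≠ 0) (η : G →* L) :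
    charIdempotent η ≠ 0 := fun h =>
  hG (by simpa [h] using (coeff_charIdempotent_one η).symm)

end MonoidAlgebra

open MonoidAlgebra

theorem MonoidAlgebra.mapAlgHom_injective {R A B M : Type*} [CommSemiring R] [Semiring A]
    [Semiring B] [Algebra R A] [Algebra R B] [Monoid M] {f : A →ₐ[R] B}
    (hf : Function.Injective f) : Function.Injective (mapAlgHom M f) := fun x y h => by
  ext m
  simpa using hf (by simpa using congr(($h).coeff m))

section TraceIdempotent

variable {G F E : Type*} [Group G] [Field F] [Field E] [Algebra F E]

theorem lift_surjective_of_adjoin_range_eq_top {χ : G →* E}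
    (hχ : Algebra.adjoin F (Set.range χ) = ⊤) : Function.Surjective (lift F E G χ) := by
  rw [← AlgHom.range_eq_top, eq_top_iff, ← hχ]
  exact Algebra.adjoin_le (by rintro _ ⟨g, rfl⟩; exact ⟨of F G g, lift_of χ g⟩)

theorem comp_injective_of_adjoin_range_eq_top {χ : G →* E}
    (hχ : Algebra.adjoin F (Set.range χ) = ⊤) :
    Function.Injective fun σ : E ≃ₐ[F] E => (σ : E →* E).comp χ := fun σ τ h =>
  AlgEquiv.coe_toAlgHom_injective <| AlgHom.ext_of_adjoin_eq_top hχ <| by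
    rintro _ ⟨g, rfl⟩
    exact DFunLike.congr_fun h g

theorem lift_comp_mapAlgHom (χ : G →* E) (σ : E ≃ₐ[F] E) (x : MonoidAlgebra F G) :
    lift E E G ((σ : E →* E).comp χ) (mapAlgHom G (Algebra.ofId F E) x) = σ (lift F E G χ x) := by
  induction x using induction_linear with
  | zero => simp only [map_zero]
  | add x y hx hy => simp only [map_add, hx, hy]
  | single g c => simp [lift_single, Algebra.smul_def]

variable (F) [Fintype G]

noncomputable def traceIdempotent (χ : G →* E) : MonoidAlgebra F G :=
  (Fintype.card G : F)⁻¹ • ∑ g : G, single g⁻¹ (Algebra.trace F E (χ g))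

variable {F}

theorem traceIdempotent_mem_center (χ : G →* E) :
    traceIdempotent F χ ∈ Set.center (MonoidAlgebra F G) := by
  rw [Semigroup.mem_center_iff]
  intro x
  induction x using induction_linear with
  | zero => rw [zero_mul, mul_zero]
  | add x y hx hy => rw [add_mul, mul_add, hx, hy]
  | single h c =>
    rw [traceIdempotent, mul_smul_comm, smul_mul_assoc, Finset.mul_sum, Finset.sum_mul]
    congr 1
    refine Fintype.sum_equiv (MulAut.conj h).toEquiv _ _ fun g => ?_
    have hconj : χ (h * g * h⁻¹) = χ g := by
      rw [map_mul, map_mul, mul_right_comm, χ.map_mul_map_inv, one_mul]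
    rw [single_mul_single, single_mul_single, MulEquiv.toEquiv_eq_coe, MulEquiv.coe_toEquiv,
      MulAut.conj_apply, hconj, mul_comm c]
    congr 1
    group

variable [FiniteDimensional F E] [IsGalois F E]

theorem mapAlgHom_traceIdempotent (χ : G →* E) :
    mapAlgHom G (Algebra.ofId F E) (traceIdempotent F χ) =
      ∑ σ : E ≃ₐ[F] E, charIdempotent ((σ : E →* E).comp χ) := by
  have hsingle (g : G) : single g⁻¹ (algebraMap F E (Algebra.trace F E (χ g))) =
      ∑ σ : E ≃ₐ[F] E, single g⁻¹ (σ (χ g)) := by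
    rw [trace_eq_sum_automorphisms, ← singleAddHom_apply, map_sum]
    rfl
  simp only [traceIdempotent, charIdempotent, map_smul, map_sum, mapAlgHom_single,
    Algebra.ofId_apply, hsingle, ← Finset.smul_sum, ← algebraMap_smul E, map_inv₀, map_natCast]
  rw [Finset.sum_comm]
  rfl

variable (hG : (Fintype.card G : E) ≠ 0)
include hG

theorem mapAlgHom_traceIdempotent_mul_of_forall_ne {χ η : G →* E}
    (hη : ∀ σ : E ≃ₐ[F] E, (σ : E →* E).comp χ ≠ η) :
    mapAlgHom G (Algebra.ofId F E) (traceIdempotent F χ) * charIdempotent η = 0 := by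
  classical
  rw [mapAlgHom_traceIdempotent, Finset.sum_mul]
  exact Finset.sum_eq_zero fun σ _ => by rw [charIdempotent_mul_charIdempotent hG, if_neg (hη σ)]

theorem mapAlgHom_traceIdempotent_mul_of_exists {χ η : G →* E}
    (hχ : Function.Injective fun σ : E ≃ₐ[F] E => (σ : E →* E).comp χ)
    (hη : ∃ σ : E ≃ₐ[F] E, (σ : E →* E).comp χ = η) :
    mapAlgHom G (Algebra.ofId F E) (traceIdempotent F χ) * charIdempotent η = charIdempotent η := by
  classical
  obtain ⟨σ, rfl⟩ := hη
  rw [mapAlgHom_traceIdempotent, Finset.sum_mul, Finset.sum_eq_single σ]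
  · rw [charIdempotent_mul_charIdempotent hG, if_pos rfl]
  · intro τ _ hτ
    rw [charIdempotent_mul_charIdempotent hG, if_neg (hχ.ne hτ)]
  · simp

theorem isIdempotentElem_traceIdempotent {χ : G →* E}
    (hχ : Function.Injective fun σ : E ≃ₐ[F] E => (σ : E →* E).comp χ) :
    IsIdempotentElem (traceIdempotent F χ) := by
  apply mapAlgHom_injective (M := G) (Algebra.ofId F E).toRingHom.injective
  rw [map_mul]
  conv_lhs => arg 2; rw [mapAlgHom_traceIdempotent]
  rw [Finset.mul_sum]
  conv_rhs => rw [mapAlgHom_traceIdempotent]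
  exact Finset.sum_congr rfl fun σ _ => mapAlgHom_traceIdempotent_mul_of_exists hG hχ ⟨σ, rfl⟩

theorem lift_eq_zero_iff_mul_traceIdempotent_eq_zero {χ : G →* E}
    (hχ : Algebra.adjoin F (Set.range χ) = ⊤) (x : MonoidAlgebra F G) :
    lift F E G χ x = 0 ↔ x * traceIdempotent F χ = 0 := by
  constructor
  · intro hx
    apply mapAlgHom_injective (M := G) (Algebra.ofId F E).toRingHom.injective
    rw [map_mul, map_zero, mapAlgHom_traceIdempotent, Finset.mul_sum]
    refine Finset.sum_eq_zero fun σ _ => ?_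
    rw [mul_charIdempotent, lift_comp_mapAlgHom, hx, map_zero, zero_smul]
  · intro hx
    have : lift F E G χ x • charIdempotent χ = 0 :=
      calc lift F E G χ x • charIdempotent χ
          = mapAlgHom G (Algebra.ofId F E) x * charIdempotent χ := by
            rw [mul_charIdempotent]
            exact congrArg (· • charIdempotent χ) (lift_mapRingHom_algebraMap (S := E) χ x).symm
        _ = mapAlgHom G (Algebra.ofId F E) (x * traceIdempotent F χ) * charIdempotent χ := by
            rw [map_mul, mul_assoc, mapAlgHom_traceIdempotent_mul_of_exists hG
              (η := χ) (comp_injective_of_adjoin_range_eq_top hχ) ⟨1, rfl⟩]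
        _ = 0 := by rw [hx, map_zero, zero_mul]
    exact (smul_eq_zero.1 this).resolve_right (charIdempotent_ne_zero hG χ)

theorem traceIdempotent_isPrimitiveCentralIdempotent {χ : G →* E}
    (hχ : Algebra.adjoin F (Set.range χ) = ⊤) :
    IsPrimitiveCentralIdempotent (traceIdempotent F χ) :=
  .of_ker (lift F E G χ).toRingHom
    (isIdempotentElem_traceIdempotent hG (comp_injective_of_adjoin_range_eq_top hχ))
    (traceIdempotent_mem_center χ) (lift_eq_zero_iff_mul_traceIdempotent_eq_zero hG hχ)

theorem traceIdempotent_eq_traceIdempotent_iff {χ ψ : G →* E}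
    (hψ : Algebra.adjoin F (Set.range ψ) = ⊤) :
    traceIdempotent F χ = traceIdempotent F ψ ↔ ∃ σ : E ≃ₐ[F] E, (σ : E →* E).comp χ = ψ := by
  constructor
  · intro h
    by_contra! hne
    have h0 := mapAlgHom_traceIdempotent_mul_of_forall_ne hG hne
    rw [h, mapAlgHom_traceIdempotent_mul_of_exists hG
      (η := ψ) (comp_injective_of_adjoin_range_eq_top hψ) ⟨1, rfl⟩] at h0
    exact charIdempotent_ne_zero hG ψ h0
  · rintro ⟨σ, rfl⟩
    simp only [traceIdempotent, MonoidHom.comp_apply, MonoidHom.coe_coe,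
      Algebra.trace_eq_of_algEquiv]

end TraceIdempotent

theorem exists_isPrimitiveRoot_apply {G M : Type*} [Group G] [CommMonoid M] {N : Subgroup G}
    [N.Normal] [IsCyclic (G ⧸ N)] (χ : G →* M) (hker : χ.ker = N) :
    ∃ g : G, IsPrimitiveRoot (χ g) (Nat.card (G ⧸ N)) := by
  have hinj : Function.Injective (QuotientGroup.lift N χ hker.ge) := by
    rw [injective_iff_map_eq_one]
    rintro ⟨x⟩ hx
    exact (QuotientGroup.eq_one_iff x).2 (hker ▸ hx)
  obtain ⟨q, hq⟩ := IsCyclic.exists_generator (α := G ⧸ N)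
  obtain ⟨g, rfl⟩ := QuotientGroup.mk_surjective q
  refine ⟨g, ?_⟩
  rw [← orderOf_eq_card_of_forall_mem_zpowers hq, ← orderOf_injective _ hinj]
  exact IsPrimitiveRoot.orderOf (χ g)

theorem IsPrimitiveRoot.isCyclotomicExtension_adjoin (K : Type*) {L : Type*} [Field K] [Field L]
    [Algebra K L] {ζ : L} {k : ℕ} [NeZero k] (hζ : IsPrimitiveRoot ζ k) :
    IsCyclotomicExtension {k} K K⟮ζ⟯ := by
  have hint : IsIntegral K ζ :=
    .of_pow (NeZero.pos k) (by rw [hζ.pow_eq_one]; exact isIntegral_one)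
  change IsCyclotomicExtension {k} K K⟮ζ⟯.toSubalgebra
  rw [adjoin_simple_toSubalgebra_of_isAlgebraic hint.isAlgebraic]
  exact hζ.adjoin_isCyclotomicExtension K

theorem adjoin_range_codRestrict_eq_top {G K L : Type*} [Group G] [Field K] [Field L]
    [Algebra K L] {ζ : L} {k : ℕ} [NeZero k] (hζ : IsPrimitiveRoot ζ k) (χ : G →* L)
    (hχ : ∀ g, χ g ∈ K⟮ζ⟯) {g₀ : G} (hg₀ : IsPrimitiveRoot (χ g₀) k) :
    Algebra.adjoin K (Set.range (χ.codRestrict K⟮ζ⟯ hχ)) = ⊤ := by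
  have := hζ.isCyclotomicExtension_adjoin K
  have hg₀' : IsPrimitiveRoot (χ.codRestrict K⟮ζ⟯ hχ g₀) k :=
    IsPrimitiveRoot.coe_submonoidClass_iff.1 hg₀
  rw [eq_top_iff, ← IsCyclotomicExtension.adjoin_primitive_root_eq_top hg₀']
  exact Algebra.adjoin_mono (Set.singleton_subset_iff.2 ⟨g₀, rfl⟩)

theorem stmt5_general (G : Type*) [Group G] [Fintype G]
    (F : IntermediateField ℚ ℂ)
    (N : Subgroup G) [N.Normal] (k : ℕ) (hk : Nat.card (G ⧸ N) = k)
    (hcyc : IsCyclic (G ⧸ N)) (ζ : ℂ) (hζ : IsPrimitiveRoot ζ k)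
    (χ ψ : G →* ℂ)
    (hkerχ : ∀ g : G, χ g = 1 ↔ g ∈ N) (hkerψ : ∀ g : G, ψ g = 1 ↔ g ∈ N)
    (hmemχ : ∀ g : G, χ g ∈ IntermediateField.adjoin F {ζ})
    (hmemψ : ∀ g : G, ψ g ∈ IntermediateField.adjoin F {ζ}) :
    IsPrimitiveCentralIdempotent
      ((Fintype.card G : F)⁻¹ • ∑ g : G, MonoidAlgebra.single g⁻¹
        (Algebra.trace F (IntermediateField.adjoin F {ζ}) ⟨χ g, hmemχ g⟩)) ∧
    (∃ f : MonoidAlgebra F G →ₐ[F] (IntermediateField.adjoin F {ζ}),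
      Function.Surjective f ∧
      ∀ x : MonoidAlgebra F G, f x = 0 ↔
        x * ((Fintype.card G : F)⁻¹ • ∑ g : G, MonoidAlgebra.single g⁻¹
          (Algebra.trace F (IntermediateField.adjoin F {ζ}) ⟨χ g, hmemχ g⟩)) = 0) ∧
    (((Fintype.card G : F)⁻¹ • ∑ g : G, MonoidAlgebra.single g⁻¹
        (Algebra.trace F (IntermediateField.adjoin F {ζ}) ⟨χ g, hmemχ g⟩)) =
     ((Fintype.card G : F)⁻¹ • ∑ g : G, MonoidAlgebra.single g⁻¹
        (Algebra.trace F (IntermediateField.adjoin F {ζ}) ⟨ψ g, hmemψ g⟩)) ↔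
      ∃ σ : IntermediateField.adjoin F {ζ} ≃ₐ[F] IntermediateField.adjoin F {ζ},
        ∀ g : G, ψ g = σ ⟨χ g, hmemχ g⟩) := by
  subst hk
  have : NeZero (Nat.card (G ⧸ N)) := ⟨Nat.card_pos.ne'⟩
  have := hζ.isCyclotomicExtension_adjoin F
  have := IsCyclotomicExtension.finiteDimensional {Nat.card (G ⧸ N)} F F⟮ζ⟯
  have := IsCyclotomicExtension.isGalois {Nat.card (G ⧸ N)} F F⟮ζ⟯
  have hG : (Fintype.card G : F⟮ζ⟯) ≠ 0 := Nat.cast_ne_zero.2 Fintype.card_ne_zero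
  obtain ⟨gχ, hgχ⟩ := exists_isPrimitiveRoot_apply χ (Subgroup.ext hkerχ)
  obtain ⟨gψ, hgψ⟩ := exists_isPrimitiveRoot_apply ψ (Subgroup.ext hkerψ)
  have hχ := adjoin_range_codRestrict_eq_top (K := F) hζ χ hmemχ hgχ
  have hψ := adjoin_range_codRestrict_eq_top (K := F) hζ ψ hmemψ hgψ
  have hprim := traceIdempotent_isPrimitiveCentralIdempotent hG hχ
  have hsurj := lift_surjective_of_adjoin_range_eq_top hχ
  have hann := lift_eq_zero_iff_mul_traceIdempotent_eq_zero hG hχ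
  have hiff := traceIdempotent_eq_traceIdempotent_iff (χ := χ.codRestrict _ hmemχ) hG hψ
  refine ⟨hprim, ⟨_, hsurj, hann⟩, hiff.trans (exists_congr fun σ => ?_)⟩
  exact MonoidHom.ext_iff.trans (forall_congr' fun g => eq_comm.trans Subtype.ext_iff)

/-- let `G` be a finite group, `N ⊴ G` with `G/N` cyclic of order `k` and `F`
a number field.  A Galois orbit `C` of faithful characters of `G/N` is represented by a
character `χ` of `G` with kernel `N` and values in `F(ζ_k)`; then
`ε_C(G,N) = (1/|G|) ∑_g Tr_{F(ζ_k)/F}(χ(gN)) g⁻¹` is a primitive central idempotent of `FG`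
with `FG·ε_C(G,N) ≅ F(ζ_k)` (expressed by a surjective `F`-algebra map `FG → F(ζ_k)` whose
vanishing locus is the annihilator of `ε_C(G,N)`), and two orbits give the same idempotent
iff they coincide (i.e. the characters are Galois conjugate). -/
theorem stmt5 (G : Type*) [Group G] [Fintype G]
    (F : IntermediateField ℚ ℂ) [FiniteDimensional ℚ F]
    (N : Subgroup G) [N.Normal] (k : ℕ) (hk : Nat.card (G ⧸ N) = k)
    (hcyc : IsCyclic (G ⧸ N)) (ζ : ℂ) (hζ : IsPrimitiveRoot ζ k)
    (χ ψ : G →* ℂ)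
    (hkerχ : ∀ g : G, χ g = 1 ↔ g ∈ N) (hkerψ : ∀ g : G, ψ g = 1 ↔ g ∈ N)
    (hmemχ : ∀ g : G, χ g ∈ IntermediateField.adjoin F {ζ})
    (hmemψ : ∀ g : G, ψ g ∈ IntermediateField.adjoin F {ζ}) :
    IsPrimitiveCentralIdempotent
      ((Fintype.card G : F)⁻¹ • ∑ g : G, MonoidAlgebra.single g⁻¹
        (Algebra.trace F (IntermediateField.adjoin F {ζ}) ⟨χ g, hmemχ g⟩)) ∧
    (∃ f : MonoidAlgebra F G →ₐ[F] (IntermediateField.adjoin F {ζ}),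
      Function.Surjective f ∧
      ∀ x : MonoidAlgebra F G, f x = 0 ↔
        x * ((Fintype.card G : F)⁻¹ • ∑ g : G, MonoidAlgebra.single g⁻¹
          (Algebra.trace F (IntermediateField.adjoin F {ζ}) ⟨χ g, hmemχ g⟩)) = 0) ∧
    (((Fintype.card G : F)⁻¹ • ∑ g : G, MonoidAlgebra.single g⁻¹
        (Algebra.trace F (IntermediateField.adjoin F {ζ}) ⟨χ g, hmemχ g⟩)) =
     ((Fintype.card G : F)⁻¹ • ∑ g : G, MonoidAlgebra.single g⁻¹
        (Algebra.trace F (IntermediateField.adjoin F {ζ}) ⟨ψ g, hmemψ g⟩)) ↔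
      ∃ σ : IntermediateField.adjoin F {ζ} ≃ₐ[F] IntermediateField.adjoin F {ζ},
        ∀ g : G, ψ g = σ ⟨χ g, hmemχ g⟩) :=
  stmt5_general G F N k hk hcyc ζ hζ χ ψ hkerχ hkerψ hmemχ hmemψ
end

section
/- Let K ⊴ H ≤ G with H/K cyclic of order k, F a number field, and C a Galois orbit of faithful characters of H/K. For g ∈ H (or more generally g ∈ G), the following are equivalent: (a) g ∈ K; (b) g·ε_C(H,K) = ε_C(H,K); (c) ĝ·ε_C(H,K) = ε_C(H,K), where ĝ = (1/|⟨g⟩|) Σ_{x∈⟨g⟩} x. -/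
/-!
The coefficient of `ε = ε_C(H, K)` at `y` is `|H|⁻¹ Tr_{E/F}(χ(y⁻¹))`, and `0` for `y ∉ H`.
The values of `χ` are roots of unity, so the real part of such a trace is a sum of `[E : F]`
complex numbers of real part at most `1`: it is at most `[E : F]`, with equality exactly when
`χ(y⁻¹) = 1`. Hence the real parts of the coefficients of `ε` attain their maximum exactly on `K`.
If `ĝ ε = ε`, the coefficient at `1` says that the average of these real parts over `⟨g⟩` is the
maximum, which forces `g ∈ K`. Conversely, `K` fixes `ε` by reindexing the sum, and `ĝ` fixes
whatever `g` fixes.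
-/

open IntermediateField MonoidAlgebra Module Finset
open scoped Classical

lemma Complex.eq_one_of_norm_le_one_of_re_eq_one {z : ℂ} (hz : ‖z‖ ≤ 1) (hre : z.re = 1) :
    z = 1 := by
  have hnorm : |z.re| = ‖z‖ := by
    rw [hre, abs_one]; exact le_antisymm (hre ▸ z.re_le_norm) hz
  exact Complex.ext hre (Complex.abs_re_eq_norm.1 hnorm)

section Trace

variable {F E : Type*} [Field F] [Field E] [Algebra F E] [Algebra F ℂ] [FiniteDimensional F E]

lemma finrank_sub_re_algebraMap_trace (α : E) :
    finrank F E - (algebraMap F ℂ (Algebra.trace F E α)).re =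
      ∑ σ : E →ₐ[F] ℂ, (1 - (σ α).re) := by
  have : CharZero F := (algebraMap F ℂ).charZero
  rw [trace_eq_sum_embeddings ℂ, Complex.re_sum, sum_sub_distrib, sum_const, card_univ,
    AlgHom.card, nsmul_one]

omit [FiniteDimensional F E] in
lemma norm_algHom_apply_of_isOfFinOrder {α : E} (hα : IsOfFinOrder α) (σ : E →ₐ[F] ℂ) :
    ‖σ α‖ = 1 := by
  obtain ⟨m, hm, hαm⟩ := isOfFinOrder_iff_pow_eq_one.1 hα
  exact Complex.norm_eq_one_of_pow_eq_one (by rw [← map_pow, hαm, map_one]) hm.ne'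

omit [FiniteDimensional F E] in
lemma re_algHom_apply_le_one {α : E} (hα : IsOfFinOrder α) (σ : E →ₐ[F] ℂ) : (σ α).re ≤ 1 :=
  norm_algHom_apply_of_isOfFinOrder hα σ ▸ (σ α).re_le_norm

lemma re_algebraMap_trace_le_finrank {α : E} (hα : IsOfFinOrder α) :
    (algebraMap F ℂ (Algebra.trace F E α)).re ≤ finrank F E := by
  rw [← sub_nonneg, finrank_sub_re_algebraMap_trace]
  exact sum_nonneg fun σ _ ↦ sub_nonneg.2 (re_algHom_apply_le_one hα σ)

lemma re_algebraMap_trace_eq_finrank_iff {α : E} (hα : IsOfFinOrder α) :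
    (algebraMap F ℂ (Algebra.trace F E α)).re = finrank F E ↔ α = 1 := by
  refine ⟨fun h ↦ ?_, ?_⟩
  · have h₀ := sub_eq_zero.2 h.symm
    rw [finrank_sub_re_algebraMap_trace,
      sum_eq_zero_iff_of_nonneg fun σ _ ↦ sub_nonneg.2 (re_algHom_apply_le_one hα σ)] at h₀
    let σ : E →ₐ[F] ℂ := IsAlgClosed.lift
    refine σ.injective ?_
    rw [map_one]
    exact Complex.eq_one_of_norm_le_one_of_re_eq_one (norm_algHom_apply_of_isOfFinOrder hα σ).le
      (sub_eq_zero.1 (h₀ σ (mem_univ σ))).symm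
  · rintro rfl
    have h := Algebra.trace_algebraMap (R := F) (S := E) 1
    rw [map_one] at h
    simp [h]

end Trace

lemma MonoidAlgebra.average_powers_mul_eq_self {k G : Type*} [DivisionRing k] [CharZero k]
    [Monoid G] {g : G} (hg : IsOfFinOrder g) {x : MonoidAlgebra k G} (hx : single g 1 * x = x) :
    ((orderOf g : k)⁻¹ • ∑ i ∈ range (orderOf g), single (g ^ i) (1 : k)) * x = x := by
  have hpow (i : ℕ) : single (g ^ i) (1 : k) * x = x := by
    induction i with
    | zero => rw [pow_zero, ← one_def, one_mul]
    | succ i ih => rw [pow_succ, ← mul_one (1 : k), ← single_mul_single, mul_assoc, hx, ih]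
  rw [smul_mul_assoc, sum_mul, sum_congr rfl fun i _ ↦ hpow i, sum_const, card_range,
    ← Nat.cast_smul_eq_nsmul k, smul_smul,
    inv_mul_cancel₀ (Nat.cast_ne_zero.2 hg.orderOf_pos.ne'), one_smul]

section Epsilon

variable {F E G : Type*} [Field F] [Field E] [Algebra F E] [Group G] {H : Subgroup G} [Fintype H]

variable (F) in
/-- The element `ε_C(H, K)`, for the character `χ` of `H` with values in `E = F(ζ_k)` given as
`ψ : H →* E`. -/
noncomputable def epsilon (ψ : H →* E) : MonoidAlgebra F G :=
  (Nat.card H : F)⁻¹ • ∑ x : H, single (x : G)⁻¹ (Algebra.trace F E (ψ x))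

lemma single_mul_epsilon_of_map_eq_one (ψ : H →* E) {a : H} (ha : ψ a = 1) :
    single (a : G) 1 * epsilon F ψ = epsilon F ψ := by
  rw [epsilon, mul_smul_comm, mul_sum, ← Equiv.sum_comp (Equiv.mulRight a)]
  congr 1
  refine sum_congr rfl fun x _ ↦ ?_
  simp [ha]

lemma coeff_epsilon_of_inv_mem (ψ : H →* E) {y : G} (hy : y⁻¹ ∈ H) :
    (epsilon F ψ).coeff y = (Nat.card H : F)⁻¹ * Algebra.trace F E (ψ ⟨y⁻¹, hy⟩) := by
  rw [epsilon, coeff_smul_apply, smul_eq_mul, coeff_sum, Finsupp.finsetSum_apply,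
    sum_eq_single ⟨y⁻¹, hy⟩]
  · simp
  · intro x _ hx
    rw [coeff_single, Finsupp.single_eq_of_ne]
    rintro rfl
    exact hx (Subtype.ext (inv_inv _).symm)
  · simp

lemma coeff_epsilon_of_inv_notMem (ψ : H →* E) {y : G} (hy : y⁻¹ ∉ H) :
    (epsilon F ψ).coeff y = 0 := by
  rw [epsilon, coeff_smul_apply, smul_eq_mul, coeff_sum, Finsupp.finsetSum_apply,
    sum_eq_zero, mul_zero]
  intro x _
  rw [coeff_single, Finsupp.single_eq_of_ne]
  rintro rfl
  exact hy (by simp)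

lemma re_algebraMap_natCast_inv_mul [Algebra F ℂ] (n : ℕ) (c : F) :
    (algebraMap F ℂ ((n : F)⁻¹ * c)).re = (n : ℝ)⁻¹ * (algebraMap F ℂ c).re := by
  rw [map_mul, map_inv₀, map_natCast, ← Complex.ofReal_natCast, ← Complex.ofReal_inv,
    Complex.re_ofReal_mul]

variable [Algebra F ℂ] [FiniteDimensional F E] (ψ : H →* E)

lemma re_algebraMap_coeff_epsilon_one :
    (algebraMap F ℂ ((epsilon F ψ).coeff 1)).re = (Nat.card H : ℝ)⁻¹ * finrank F E := by
  rw [coeff_epsilon_of_inv_mem ψ (by simp), re_algebraMap_natCast_inv_mul]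
  congr 1
  exact (re_algebraMap_trace_eq_finrank_iff (ψ.isOfFinOrder (isOfFinOrder_of_finite _))).2
    ((congrArg ψ (Subtype.ext inv_one)).trans ψ.map_one)

lemma re_algebraMap_coeff_epsilon_le (y : G) :
    (algebraMap F ℂ ((epsilon F ψ).coeff y)).re ≤
      (algebraMap F ℂ ((epsilon F ψ).coeff 1)).re := by
  rw [re_algebraMap_coeff_epsilon_one]
  by_cases hy : y⁻¹ ∈ H
  · rw [coeff_epsilon_of_inv_mem ψ hy, re_algebraMap_natCast_inv_mul]
    gcongr
    exact re_algebraMap_trace_le_finrank (ψ.isOfFinOrder (isOfFinOrder_of_finite _))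
  · rw [coeff_epsilon_of_inv_notMem ψ hy, map_zero, Complex.zero_re]
    positivity

lemma re_algebraMap_coeff_epsilon_lt {K : Subgroup G} (hker : ∀ x : H, ψ x = 1 ↔ (x : G) ∈ K)
    {y : G} (hy : y⁻¹ ∉ K) :
    (algebraMap F ℂ ((epsilon F ψ).coeff y)).re <
      (algebraMap F ℂ ((epsilon F ψ).coeff 1)).re := by
  have hH : 0 < Nat.card H := Nat.card_pos
  rw [re_algebraMap_coeff_epsilon_one]
  by_cases hyH : y⁻¹ ∈ H
  · rw [coeff_epsilon_of_inv_mem ψ hyH, re_algebraMap_natCast_inv_mul]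
    refine mul_lt_mul_of_pos_left ?_ (by positivity)
    refine (re_algebraMap_trace_le_finrank (ψ.isOfFinOrder (isOfFinOrder_of_finite _))).lt_of_ne
      fun h ↦ hy ?_
    exact (hker _).1
      ((re_algebraMap_trace_eq_finrank_iff (ψ.isOfFinOrder (isOfFinOrder_of_finite _))).1 h)
  · rw [coeff_epsilon_of_inv_notMem ψ hyH, map_zero, Complex.zero_re]
    have : 0 < finrank F E := finrank_pos
    positivity

lemma mem_of_average_powers_mul_epsilon_eq_self {K : Subgroup G}
    (hker : ∀ x : H, ψ x = 1 ↔ (x : G) ∈ K) {g : G} (hg : IsOfFinOrder g)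
    (h : ((orderOf g : F)⁻¹ • ∑ i ∈ range (orderOf g), single (g ^ i) (1 : F)) * epsilon F ψ =
      epsilon F ψ) :
    g ∈ K := by
  by_contra hgK
  have hn : 1 < orderOf g := by
    have : orderOf g ≠ 1 := fun h1 ↦ hgK (orderOf_eq_one_iff.1 h1 ▸ K.one_mem)
    have := hg.orderOf_pos
    omega
  have : CharZero F := (algebraMap F ℂ).charZero
  have hcoeff : ∑ i ∈ range (orderOf g), (epsilon F ψ).coeff (g ^ i)⁻¹ =
      ∑ _i ∈ range (orderOf g), (epsilon F ψ).coeff 1 := by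
    have h₁ := congrArg (fun x ↦ x.coeff 1) h
    simp only [smul_mul_assoc, sum_mul, coeff_smul_apply, coeff_sum, Finsupp.finsetSum_apply,
      coeff_single_mul_apply, one_mul, mul_one, smul_eq_mul] at h₁
    rw [sum_const, card_range, nsmul_eq_mul, ← h₁, ← mul_assoc,
      mul_inv_cancel₀ (Nat.cast_ne_zero.2 hg.orderOf_pos.ne'), one_mul]
  have hre := congrArg (fun c : F ↦ (algebraMap F ℂ c).re) hcoeff
  simp only [map_sum, Complex.re_sum] at hre
  exact (sum_lt_sum (fun i _ ↦ re_algebraMap_coeff_epsilon_le ψ _)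
    ⟨1, mem_range.2 hn, re_algebraMap_coeff_epsilon_lt ψ hker (by simpa using hgK)⟩).ne hre

end Epsilon

theorem stmt6_general (G : Type*) [Group G] [Fintype G]
    (F : IntermediateField ℚ ℂ)
    (H K : Subgroup G) (hKH : K ≤ H)
    (k : ℕ) (hk : Nat.card K * k = Nat.card H)
    (ζ : ℂ) (hζ : IsPrimitiveRoot ζ k)
    (χ : H →* ℂ) (hker : ∀ x : H, χ x = 1 ↔ (x : G) ∈ K)
    (hmem : ∀ x : H, χ x ∈ IntermediateField.adjoin F {ζ})
    (g : G) :
    ((g ∈ K) ↔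
      MonoidAlgebra.single g (1 : F) *
        ((Nat.card H : F)⁻¹ • ∑ x : H, MonoidAlgebra.single ((x : G))⁻¹
          (Algebra.trace F (IntermediateField.adjoin F {ζ}) ⟨χ x, hmem x⟩)) =
      ((Nat.card H : F)⁻¹ • ∑ x : H, MonoidAlgebra.single ((x : G))⁻¹
          (Algebra.trace F (IntermediateField.adjoin F {ζ}) ⟨χ x, hmem x⟩))) ∧
    ((g ∈ K) ↔
      ((orderOf g : F)⁻¹ • ∑ i ∈ Finset.range (orderOf g),
          MonoidAlgebra.single (g ^ i) (1 : F)) *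
        ((Nat.card H : F)⁻¹ • ∑ x : H, MonoidAlgebra.single ((x : G))⁻¹
          (Algebra.trace F (IntermediateField.adjoin F {ζ}) ⟨χ x, hmem x⟩)) =
      ((Nat.card H : F)⁻¹ • ∑ x : H, MonoidAlgebra.single ((x : G))⁻¹
          (Algebra.trace F (IntermediateField.adjoin F {ζ}) ⟨χ x, hmem x⟩))) := by
  have hk₀ : 0 < k := Nat.pos_of_ne_zero <| by
    rintro rfl
    exact Nat.card_pos.ne' (hk.symm.trans (mul_zero _))
  have : FiniteDimensional F (adjoin F {ζ}) :=
    adjoin.finiteDimensional (hζ.isIntegral hk₀).tower_top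
  set ψ := χ.codRestrict (adjoin F {ζ}) hmem
  have hψ (x : H) : ψ x = 1 ↔ (x : G) ∈ K := Subtype.ext_iff.trans (hker x)
  change (g ∈ K ↔ single g 1 * epsilon F ψ = epsilon F ψ) ∧
    (g ∈ K ↔ ((orderOf g : F)⁻¹ • ∑ i ∈ range (orderOf g), single (g ^ i) 1) * epsilon F ψ =
      epsilon F ψ)
  have hg := isOfFinOrder_of_finite g
  have hab : g ∈ K → single g 1 * epsilon F ψ = epsilon F ψ := fun hgK ↦
    single_mul_epsilon_of_map_eq_one ψ (a := ⟨g, hKH hgK⟩) ((hψ _).2 hgK)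
  have hbc := average_powers_mul_eq_self hg (x := epsilon F ψ)
  have hca := mem_of_average_powers_mul_epsilon_eq_self (F := F) ψ hψ hg
  exact ⟨⟨hab, hca ∘ hbc⟩, ⟨hbc ∘ hab, hca⟩⟩

/-- let `K ⊴ H ≤ G` with `H/K` cyclic of order `k`, `F` a number field and
`C` a Galois orbit of faithful characters of `H/K`, represented by a character `χ` of `H`
with kernel `K` and values in `F(ζ_k)`.  With
`ε_C(H,K) = (1/|H|) ∑_{h∈H} Tr_{F(ζ_k)/F}(χ(hK)) h⁻¹ ∈ FH ⊆ FG`, the following are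
equivalent for `g ∈ G`: (a) `g ∈ K`; (b) `g·ε_C(H,K) = ε_C(H,K)`;
(c) `ĝ·ε_C(H,K) = ε_C(H,K)` where `ĝ = (1/|⟨g⟩|) ∑_{x∈⟨g⟩} x`. -/
theorem stmt6 (G : Type*) [Group G] [Fintype G]
    (F : IntermediateField ℚ ℂ) [FiniteDimensional ℚ F]
    (H K : Subgroup G) (hKH : K ≤ H)
    (hnorm : ∀ h ∈ H, ∀ x ∈ K, h * x * h⁻¹ ∈ K)
    (k : ℕ) (hk : Nat.card K * k = Nat.card H)
    (hcyc : ∃ c ∈ H, ∀ x ∈ H, ∃ i : ℕ, (c ^ i)⁻¹ * x ∈ K)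
    (ζ : ℂ) (hζ : IsPrimitiveRoot ζ k)
    (χ : H →* ℂ) (hker : ∀ x : H, χ x = 1 ↔ (x : G) ∈ K)
    (hmem : ∀ x : H, χ x ∈ IntermediateField.adjoin F {ζ})
    (g : G) :
    ((g ∈ K) ↔
      MonoidAlgebra.single g (1 : F) *
        ((Nat.card H : F)⁻¹ • ∑ x : H, MonoidAlgebra.single ((x : G))⁻¹
          (Algebra.trace F (IntermediateField.adjoin F {ζ}) ⟨χ x, hmem x⟩)) =
      ((Nat.card H : F)⁻¹ • ∑ x : H, MonoidAlgebra.single ((x : G))⁻¹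
          (Algebra.trace F (IntermediateField.adjoin F {ζ}) ⟨χ x, hmem x⟩))) ∧
    ((g ∈ K) ↔
      ((orderOf g : F)⁻¹ • ∑ i ∈ Finset.range (orderOf g),
          MonoidAlgebra.single (g ^ i) (1 : F)) *
        ((Nat.card H : F)⁻¹ • ∑ x : H, MonoidAlgebra.single ((x : G))⁻¹
          (Algebra.trace F (IntermediateField.adjoin F {ζ}) ⟨χ x, hmem x⟩)) =
      ((Nat.card H : F)⁻¹ • ∑ x : H, MonoidAlgebra.single ((x : G))⁻¹
          (Algebra.trace F (IntermediateField.adjoin F {ζ}) ⟨χ x, hmem x⟩))) :=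
  stmt6_general G F H K hKH k hk ζ hζ χ hker hmem g
end

section
/- Let K ⊴ H ≤ G with H/K cyclic, H normal in N_G(K), and F a number field. Then the centralizer in G of ε_C(H,K) equals E_F(G,H/K), the stabilizer in N_G(H) ∩ N_G(K) of any orbit C of faithful characters of H/K under Gal(F(ζ_{[H:K]})/F), with respect to the conjugation action on such orbits. -/
/-! The coefficient of `z⁻¹` in `|H| • ε_C(H,K)` is `Tr(χ z)` (zero off `H`), so `g` centralizes
`ε_C(H,K)` iff this function is invariant under conjugation by `g`. For a root of unity `ξ` in a
Galois extension `L/F` inside `ℂ`, `Tr(ξ) = [L:F]` only if `ξ = 1`, since all conjugates of `ξ`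
have absolute value one; so `K` is the level set `{Tr ∘ χ = [L:F]}`, and invariance forces
`g ∈ N_G(K)`, hence `g ∈ N_G(H)`. Then `χ(c)` and `χ(gcg⁻¹)` have the same traces in all powers,
and power sums of `n`-th roots of unity determine their multiplicities (discrete Fourier
inversion), so `χ(gcg⁻¹) = σ(χ(c))` for some `σ ∈ Gal(L/F)`; as `c` generates `H` modulo `K`,
this gives `χ^g = σ ∘ χ`. -/

open scoped Classical

open Finset IntermediateField

lemma IsPrimitiveRoot.adjoin_simple_isCyclotomicExtension {F E : Type*} [Field F] [Field E]
    [Algebra F E] {ζ : E} {k : ℕ} [NeZero k] (hζ : IsPrimitiveRoot ζ k) :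
    IsCyclotomicExtension {k} F F⟮ζ⟯ := by
  have hint : IsIntegral F ζ := (hζ.isIntegral (Nat.pos_of_ne_zero (NeZero.ne k))).tower_top
  change IsCyclotomicExtension {k} F F⟮ζ⟯.toSubalgebra
  rw [adjoin_simple_toSubalgebra_of_isAlgebraic hint.isAlgebraic]
  exact hζ.adjoin_isCyclotomicExtension F

namespace MonoidAlgebra

variable {R G : Type*} [Semiring R] [Group G]

lemma coeff_single_inv_mul_mul_single (a : MonoidAlgebra R G) (g y : G) :
    (single g⁻¹ 1 * a * single g 1).coeff y = a.coeff (g * y * g⁻¹) := by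
  simp [mul_assoc]

lemma single_inv_mul_mul_single_eq_iff (a : MonoidAlgebra R G) (g : G) :
    single g⁻¹ 1 * a * single g 1 = a ↔ ∀ y, a.coeff (g * y * g⁻¹) = a.coeff y := by
  simp only [← coeff_inj, Finsupp.ext_iff, coeff_single_inv_mul_mul_single]

lemma coeff_sum_single_inv (H : Subgroup G) [Fintype H] (t : H → R) (y : G) :
    (∑ x : H, single (x : G)⁻¹ (t x)).coeff y = if h : y⁻¹ ∈ H then t ⟨y⁻¹, h⟩ else 0 := by
  simp only [coeff_sum, Finset.sum_apply', coeff_single, Finsupp.single_apply]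
  split_ifs with hy
  · have : ∀ x : H, (x : G)⁻¹ = y ↔ x = ⟨y⁻¹, hy⟩ := fun x => by
      rw [inv_eq_iff_eq_inv, Subtype.ext_iff]
    simp only [this, Finset.sum_ite_eq', Finset.mem_univ, if_true]
  · refine Finset.sum_eq_zero fun x _ => if_neg ?_
    rintro rfl
    exact hy (by simp)

lemma conj_smul_sum_single_inv_eq_iff {F : Type*} [Field F] (H : Subgroup G) [Fintype H]
    (t : H → F) {c : F} (hc : c ≠ 0) (g : G) :
    single g⁻¹ 1 * (c • ∑ x : H, single (x : G)⁻¹ (t x)) * single g 1 =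
        c • ∑ x : H, single (x : G)⁻¹ (t x) ↔
      ∀ z, (if h : g * z * g⁻¹ ∈ H then t ⟨_, h⟩ else 0) = if h : z ∈ H then t ⟨z, h⟩ else 0 := by
  simp only [single_inv_mul_mul_single_eq_iff, coeff_smul_apply, coeff_sum_single_inv,
    smul_eq_mul, mul_right_inj' hc, mul_inv_rev, inv_inv, ← mul_assoc]
  exact ⟨fun h z => by simpa using h z⁻¹, fun h y => h y⁻¹⟩

end MonoidAlgebra

section RootsOfUnity

variable {𝕜 : Type*} [Field 𝕜] {n : ℕ}

lemma geom_sum_eq_ite_of_pow_eq_one {x : 𝕜} (hx : x ^ n = 1) :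
    ∑ m ∈ range n, x ^ m = if x = 1 then (n : 𝕜) else 0 := by
  split_ifs with h
  · simp [h]
  · rw [geom_sum_eq h, hx, sub_self, zero_div]

lemma sum_range_sum_pow_mul_inv_pow {ι : Type*} [Fintype ι] {u : ι → 𝕜}
    (hu : ∀ i, u i ^ n = 1) {w : 𝕜} (hw : w ^ n = 1) (hn : n ≠ 0) :
    ∑ m ∈ range n, (∑ i, u i ^ m) * w⁻¹ ^ m = n * #{i | u i = w} := by
  have hw0 : w ≠ 0 := by rintro rfl; simp [hn] at hw
  calc ∑ m ∈ range n, (∑ i, u i ^ m) * w⁻¹ ^ m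
      = ∑ i, ∑ m ∈ range n, (u i * w⁻¹) ^ m := by
        simp only [Finset.sum_mul, mul_pow]; exact Finset.sum_comm
    _ = ∑ i, if u i = w then (n : 𝕜) else 0 := by
        refine Finset.sum_congr rfl fun i _ => ?_
        rw [geom_sum_eq_ite_of_pow_eq_one (by rw [mul_pow, hu, inv_pow, hw, inv_one, one_mul]),
          mul_inv_eq_one₀ hw0]
    _ = n * #{i | u i = w} := by rw [← Finset.sum_filter, sum_const, nsmul_eq_mul, mul_comm]

lemma exists_eq_of_sum_pow_eq [CharZero 𝕜] {ι : Type*} [Fintype ι] (hn : n ≠ 0) {u v : ι → 𝕜}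
    (hu : ∀ i, u i ^ n = 1) (hv : ∀ i, v i ^ n = 1) (h : ∀ m, ∑ i, u i ^ m = ∑ i, v i ^ m)
    (j : ι) : ∃ i, u i = v j := by
  have hcount := sum_range_sum_pow_mul_inv_pow hu (hv j) hn
  simp only [h, sum_range_sum_pow_mul_inv_pow hv (hv j) hn, mul_right_inj' (Nat.cast_ne_zero.2 hn),
    Nat.cast_inj] at hcount
  have : #{i | v i = v j} ≠ 0 := Finset.card_ne_zero.2 ⟨j, by simp⟩
  obtain ⟨i, hi⟩ := Finset.card_ne_zero.1 (hcount ▸ this)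
  exact ⟨i, (Finset.mem_filter.1 hi).2⟩

end RootsOfUnity

lemma exists_algEquiv_apply_eq_of_trace_pow_eq {F L : Type*} [Field F] [Field L] [CharZero L]
    [Algebra F L] [FiniteDimensional F L] [IsGalois F L] {n : ℕ} (hn : n ≠ 0) {z w : L}
    (hz : z ^ n = 1) (hw : w ^ n = 1)
    (h : ∀ m, Algebra.trace F L (z ^ m) = Algebra.trace F L (w ^ m)) :
    ∃ τ : L ≃ₐ[F] L, τ z = w := by
  have hconj : ∀ {x : L}, x ^ n = 1 → ∀ σ : L ≃ₐ[F] L, σ x ^ n = 1 := fun hx σ => by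
    rw [← map_pow, hx, map_one]
  have hsum : ∀ m, ∑ σ : L ≃ₐ[F] L, σ z ^ m = ∑ σ : L ≃ₐ[F] L, σ w ^ m := fun m => by
    simp only [← map_pow, ← trace_eq_sum_automorphisms, h]
  simpa using exists_eq_of_sum_pow_eq hn (hconj hz) (hconj hw) hsum 1

lemma Complex.eq_one_of_sum_eq_card {ι : Type*} {s : Finset ι} {f : ι → ℂ}
    (hf : ∀ i ∈ s, ‖f i‖ ≤ 1) (hsum : ∑ i ∈ s, f i = #s) : ∀ i ∈ s, f i = 1 := by
  have hre_le : ∀ i ∈ s, (f i).re ≤ 1 := fun i hi => (re_le_norm _).trans (hf i hi)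
  have hre_sum : ∑ i ∈ s, (f i).re = ∑ i ∈ s, 1 := by simpa [re_sum] using congrArg re hsum
  intro i hi
  have hre : (f i).re = 1 := (Finset.sum_eq_sum_iff_of_le hre_le).1 hre_sum i hi
  have hnorm : |(f i).re| = ‖f i‖ :=
    le_antisymm (abs_re_le_norm _) (by rw [hre, abs_one]; exact hf i hi)
  exact Complex.ext hre (abs_re_eq_norm.1 hnorm)

lemma IntermediateField.trace_eq_finrank_iff {F : Type*} [Field F] [Algebra F ℂ]
    {L : IntermediateField F ℂ} [FiniteDimensional F L] [IsGalois F L] {n : ℕ} (hn : n ≠ 0)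
    {x : L} (hx : x ^ n = 1) : Algebra.trace F L x = Module.finrank F L ↔ x = 1 := by
  refine ⟨fun h => ?_, fun h => by
    rw [h, ← map_one (algebraMap F L), Algebra.trace_algebraMap, nsmul_eq_mul, mul_one]⟩
  have hsum : ∑ σ : L ≃ₐ[F] L, ((σ x : L) : ℂ) = #(univ : Finset (L ≃ₐ[F] L)) := by
    have := congrArg ((↑) : L → ℂ) (trace_eq_sum_automorphisms (K := F) x)
    rw [h] at this
    simpa [← Nat.card_eq_fintype_card, IsGalois.card_aut_eq_finrank] using this.symm
  have hnorm : ∀ σ ∈ (univ : Finset (L ≃ₐ[F] L)), ‖((σ x : L) : ℂ)‖ ≤ 1 := fun σ _ =>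
    (Complex.norm_eq_one_of_pow_eq_one (by simp [← IntermediateField.coe_pow, ← map_pow, hx]) hn).le
  simpa using Complex.eq_one_of_sum_eq_card hnorm hsum 1 (mem_univ _)

section Character

variable {G : Type*} [Group G] {H K : Subgroup G}

lemma MonoidHom.map_eq_pow_of_inv_pow_mul_mem {M : Type*} [Monoid M] (ψ : H →* M)
    (hK : ∀ y : H, (y : G) ∈ K → ψ y = 1) {c x : H} {i : ℕ} (h : ((c : G) ^ i)⁻¹ * x ∈ K) :
    ψ x = ψ c ^ i := by
  have hy : ψ ((c ^ i)⁻¹ * x) = 1 := hK _ (by simpa using h)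
  calc ψ x = ψ (c ^ i * ((c ^ i)⁻¹ * x)) := by rw [mul_inv_cancel_left]
    _ = ψ c ^ i := by rw [map_mul, hy, mul_one, map_pow]

lemma Subgroup.mem_normalizer_of_forall_conj_mem {g : G}
    (hHK : ∀ n ∈ normalizer (K : Set G), ∀ h ∈ H, n * h * n⁻¹ ∈ H)
    (hg : g ∈ normalizer (K : Set G)) : g ∈ normalizer (H : Set G) := by
  refine mem_normalizer_iff.2 fun h => ⟨hHK g hg h, fun hgh => ?_⟩
  simpa [mul_assoc] using hHK g⁻¹ (inv_mem hg) _ hgh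

variable {F : Type*} [Field F] [Algebra F ℂ] {L : IntermediateField F ℂ}

variable (F) in
/-- `|H| • ε_C(H,K)` has coefficient `extTrace F ψ z` at `z⁻¹`. -/
noncomputable def extTrace (ψ : H →* L) (z : G) : F :=
  if h : z ∈ H then Algebra.trace F L (ψ ⟨z, h⟩) else 0

lemma extTrace_of_mem (ψ : H →* L) {z : G} (h : z ∈ H) :
    extTrace F ψ z = Algebra.trace F L (ψ ⟨z, h⟩) :=
  dif_pos h

lemma extTrace_of_notMem (ψ : H →* L) {z : G} (h : z ∉ H) : extTrace F ψ z = 0 :=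
  dif_neg h

lemma map_pow_card_eq_one (ψ : H →* L) (x : H) : ψ x ^ Nat.card H = 1 := by
  rw [← map_pow, pow_card_eq_one', map_one]

lemma extTrace_conj_of_algEquiv {ψ : H →* L} {g : G} (hgH : g ∈ Subgroup.normalizer (H : Set G))
    (σ : L ≃ₐ[F] L) (hσ : ∀ (x : G) (hx : x ∈ H) (hgx : g * x * g⁻¹ ∈ H),
      ψ ⟨g * x * g⁻¹, hgx⟩ = σ (ψ ⟨x, hx⟩)) (z : G) :
    extTrace F ψ (g * z * g⁻¹) = extTrace F ψ z := by
  by_cases hz : z ∈ H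
  · have hgz := (Subgroup.mem_normalizer_iff.1 hgH z).1 hz
    rw [extTrace_of_mem ψ hgz, extTrace_of_mem ψ hz, hσ z hz hgz, Algebra.trace_eq_of_algEquiv]
  · rw [extTrace_of_notMem ψ hz,
      extTrace_of_notMem ψ (mt (Subgroup.mem_normalizer_iff.1 hgH z).2 hz)]

variable [Finite H] [FiniteDimensional F L] [IsGalois F L] {ψ : H →* L}

lemma mem_iff_extTrace_eq_finrank (hKH : K ≤ H) (hker : ∀ x : H, ψ x = 1 ↔ (x : G) ∈ K)
    (z : G) : z ∈ K ↔ extTrace F ψ z = Module.finrank F L := by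
  by_cases hz : z ∈ H
  · rw [extTrace_of_mem ψ hz, trace_eq_finrank_iff Nat.card_pos.ne' (map_pow_card_eq_one ψ _),
      hker]
  · have := (algebraMap F ℂ).charZero
    rw [extTrace_of_notMem ψ hz, eq_comm, Nat.cast_eq_zero]
    exact iff_of_false (fun hzK => hz (hKH hzK)) Module.finrank_pos.ne'

lemma mem_normalizer_of_extTrace_conj (hKH : K ≤ H) (hker : ∀ x : H, ψ x = 1 ↔ (x : G) ∈ K)
    {g : G} (hg : ∀ z, extTrace F ψ (g * z * g⁻¹) = extTrace F ψ z) :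
    g ∈ Subgroup.normalizer (K : Set G) :=
  Subgroup.mem_normalizer_iff.2 fun z => by
    rw [mem_iff_extTrace_eq_finrank hKH hker, mem_iff_extTrace_eq_finrank hKH hker, hg]

lemma exists_algEquiv_of_extTrace_conj (hker : ∀ x : H, ψ x = 1 ↔ (x : G) ∈ K)
    (hcyc : ∃ c ∈ H, ∀ x ∈ H, ∃ i : ℕ, (c ^ i)⁻¹ * x ∈ K) {g : G}
    (hgH : g ∈ Subgroup.normalizer (H : Set G)) (hgK : g ∈ Subgroup.normalizer (K : Set G))
    (hg : ∀ z, extTrace F ψ (g * z * g⁻¹) = extTrace F ψ z) :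
    ∃ σ : L ≃ₐ[F] L, ∀ (x : G) (hx : x ∈ H) (hgx : g * x * g⁻¹ ∈ H),
      ψ ⟨g * x * g⁻¹, hgx⟩ = σ (ψ ⟨x, hx⟩) := by
  obtain ⟨c, hcH, hc⟩ := hcyc
  have hconjH : ∀ {x}, x ∈ H → g * x * g⁻¹ ∈ H := (Subgroup.mem_normalizer_iff.1 hgH _).1
  have htrace : ∀ m : ℕ, Algebra.trace F L (ψ ⟨c, hcH⟩ ^ m) =
      Algebra.trace F L (ψ ⟨g * c * g⁻¹, hconjH hcH⟩ ^ m) := fun m => by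
    have := hg (c ^ m)
    rw [extTrace_of_mem ψ (pow_mem hcH m), extTrace_of_mem ψ (hconjH (pow_mem hcH m))] at this
    simp only [← map_pow, SubmonoidClass.mk_pow, conj_pow, this]
  obtain ⟨σ, hσ⟩ := exists_algEquiv_apply_eq_of_trace_pow_eq Nat.card_pos.ne'
    (map_pow_card_eq_one ψ _) (map_pow_card_eq_one ψ _) htrace
  have hψK : ∀ y : H, (y : G) ∈ K → ψ y = 1 := fun y => (hker y).2
  refine ⟨σ, fun x hx hgx => ?_⟩
  obtain ⟨i, hi⟩ := hc x hx
  have hgi : ((g * c * g⁻¹) ^ i)⁻¹ * (g * x * g⁻¹) ∈ K := by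
    convert (Subgroup.mem_normalizer_iff.1 hgK _).1 hi using 1
    rw [conj_pow]
    group
  rw [ψ.map_eq_pow_of_inv_pow_mul_mem hψK (c := ⟨c, hcH⟩) (x := ⟨x, hx⟩) hi,
    ψ.map_eq_pow_of_inv_pow_mul_mem hψK (c := ⟨_, hconjH hcH⟩) hgi, map_pow, hσ]

theorem extTrace_conj_eq_iff (hKH : K ≤ H)
    (hHK : ∀ n ∈ Subgroup.normalizer (K : Set G), ∀ h ∈ H, n * h * n⁻¹ ∈ H)
    (hcyc : ∃ c ∈ H, ∀ x ∈ H, ∃ i : ℕ, (c ^ i)⁻¹ * x ∈ K)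
    (hker : ∀ x : H, ψ x = 1 ↔ (x : G) ∈ K) (g : G) :
    (∀ z, extTrace F ψ (g * z * g⁻¹) = extTrace F ψ z) ↔
      g ∈ Subgroup.normalizer (H : Set G) ∧ g ∈ Subgroup.normalizer (K : Set G) ∧
        ∃ σ : L ≃ₐ[F] L, ∀ (x : G) (hx : x ∈ H) (hgx : g * x * g⁻¹ ∈ H),
          ψ ⟨g * x * g⁻¹, hgx⟩ = σ (ψ ⟨x, hx⟩) := by
  refine ⟨fun hg => ?_, fun ⟨hgH, _, σ, hσ⟩ => extTrace_conj_of_algEquiv hgH σ hσ⟩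
  have hgK := mem_normalizer_of_extTrace_conj hKH hker hg
  have hgH := Subgroup.mem_normalizer_of_forall_conj_mem hHK hgK
  exact ⟨hgH, hgK, exists_algEquiv_of_extTrace_conj hker hcyc hgH hgK hg⟩

end Character

theorem stmt7_general (G : Type*) [Group G] [Fintype G]
    (F : IntermediateField ℚ ℂ)
    (H K : Subgroup G) (hKH : K ≤ H)
    (hHnormal : ∀ n ∈ (Subgroup.normalizer (K : Set G)), ∀ h ∈ H, n * h * n⁻¹ ∈ H)
    (k : ℕ) (hk : Nat.card K * k = Nat.card H)
    (hcyc : ∃ c ∈ H, ∀ x ∈ H, ∃ i : ℕ, (c ^ i)⁻¹ * x ∈ K)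
    (ζ : ℂ) (hζ : IsPrimitiveRoot ζ k)
    (χ : H →* ℂ) (hker : ∀ x : H, χ x = 1 ↔ (x : G) ∈ K)
    (hmem : ∀ x : H, χ x ∈ IntermediateField.adjoin F {ζ}) :
    ∀ g : G,
      (MonoidAlgebra.single g⁻¹ (1 : F) *
        ((Nat.card H : F)⁻¹ • ∑ x : H, MonoidAlgebra.single ((x : G))⁻¹
          (Algebra.trace F (IntermediateField.adjoin F {ζ}) ⟨χ x, hmem x⟩)) *
        MonoidAlgebra.single g (1 : F) =
       ((Nat.card H : F)⁻¹ • ∑ x : H, MonoidAlgebra.single ((x : G))⁻¹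
          (Algebra.trace F (IntermediateField.adjoin F {ζ}) ⟨χ x, hmem x⟩))) ↔
      (g ∈ (Subgroup.normalizer (H : Set G)) ∧ g ∈ (Subgroup.normalizer (K : Set G)) ∧
        ∃ σ : IntermediateField.adjoin F {ζ} ≃ₐ[F] IntermediateField.adjoin F {ζ},
          ∀ (x : G) (hx : x ∈ H) (hgx : g * x * g⁻¹ ∈ H),
            χ ⟨g * x * g⁻¹, hgx⟩ = σ ⟨χ ⟨x, hx⟩, hmem ⟨x, hx⟩⟩) := by
  intro g
  have : NeZero k := ⟨by rintro rfl; simp [eq_comm] at hk⟩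
  have := hζ.adjoin_simple_isCyclotomicExtension (F := F)
  have := IsCyclotomicExtension.finiteDimensional {k} F F⟮ζ⟯
  have := IsCyclotomicExtension.isGalois {k} F F⟮ζ⟯
  let ψ : H →* F⟮ζ⟯ := χ.codRestrict _ hmem
  have hψ : ∀ x : H, ψ x = 1 ↔ (x : G) ∈ K := by simpa [ψ, Subtype.ext_iff] using hker
  rw [MonoidAlgebra.conj_smul_sum_single_inv_eq_iff H _
    (inv_ne_zero (Nat.cast_ne_zero.2 Nat.card_pos.ne')) g]
  refine (extTrace_conj_eq_iff hKH hHnormal hcyc hψ g).trans ?_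
  simp only [ψ, Subtype.ext_iff, MonoidHom.codRestrict_apply]

/-- let `K ⊴ H ≤ G` with `H/K` cyclic, `H ⊴ N_G(K)`, and `F` a number field.
A Galois orbit `C` of faithful characters of `H/K` is represented by a character `χ` of `H`
with kernel `K` and values in `F(ζ_{[H:K]})`.  Then
`Cen_G(ε_C(H,K)) = E_F(G,H/K)`: an element `g ∈ G` centralizes
`ε_C(H,K) = (1/|H|) ∑_{h∈H} Tr_{F(ζ_k)/F}(χ(hK)) h⁻¹` iff `g ∈ N_G(H) ∩ N_G(K)` and
the conjugate orbit `C^g` equals `C`, i.e. `χ^g = σ ∘ χ` for some `σ ∈ Gal(F(ζ_k)/F)`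
(where `χ^g(gxg⁻¹) = χ(x)`... i.e. `χ^g(y) = χ(g y g⁻¹)`). -/
theorem stmt7 (G : Type*) [Group G] [Fintype G]
    (F : IntermediateField ℚ ℂ) [FiniteDimensional ℚ F]
    (H K : Subgroup G) (hKH : K ≤ H) (hHN : H ≤ (Subgroup.normalizer (K : Set G)))
    (hHnormal : ∀ n ∈ (Subgroup.normalizer (K : Set G)), ∀ h ∈ H, n * h * n⁻¹ ∈ H)
    (k : ℕ) (hk : Nat.card K * k = Nat.card H)
    (hcyc : ∃ c ∈ H, ∀ x ∈ H, ∃ i : ℕ, (c ^ i)⁻¹ * x ∈ K)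
    (ζ : ℂ) (hζ : IsPrimitiveRoot ζ k)
    (χ : H →* ℂ) (hker : ∀ x : H, χ x = 1 ↔ (x : G) ∈ K)
    (hmem : ∀ x : H, χ x ∈ IntermediateField.adjoin F {ζ}) :
    ∀ g : G,
      (MonoidAlgebra.single g⁻¹ (1 : F) *
        ((Nat.card H : F)⁻¹ • ∑ x : H, MonoidAlgebra.single ((x : G))⁻¹
          (Algebra.trace F (IntermediateField.adjoin F {ζ}) ⟨χ x, hmem x⟩)) *
        MonoidAlgebra.single g (1 : F) =
       ((Nat.card H : F)⁻¹ • ∑ x : H, MonoidAlgebra.single ((x : G))⁻¹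
          (Algebra.trace F (IntermediateField.adjoin F {ζ}) ⟨χ x, hmem x⟩))) ↔
      (g ∈ (Subgroup.normalizer (H : Set G)) ∧ g ∈ (Subgroup.normalizer (K : Set G)) ∧
        ∃ σ : IntermediateField.adjoin F {ζ} ≃ₐ[F] IntermediateField.adjoin F {ζ},
          ∀ (x : G) (hx : x ∈ H) (hgx : g * x * g⁻¹ ∈ H),
            χ ⟨g * x * g⁻¹, hgx⟩ = σ ⟨χ ⟨x, hx⟩, hmem ⟨x, hx⟩⟩) :=
  stmt7_general G F H K hKH hHnormal k hk hcyc ζ hζ χ hker hmem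
end

section
/- Let K ⊴ H ≤ G with H/K cyclic of order k and let N = N_G(H) ∩ N_G(K) act on the Galois orbits of faithful characters of H/K by conjugation. Then for any orbit C containing a faithful character χ and any generator hK of H/K, the stabilizer of C in N equals {g ∈ N : g⁻¹hgK = h^iK for some i ∈ I_k(F)}, and this stabilizer is independent of the choice of C and of the generator hK. -/
open IntermediateField

/-! The values of `χ` are the powers of `c = χ h`, and `c` is a primitive `k`-th root of unity
because `χ` embeds `H/K`, of order `k`, into `ℂ`. Hence an automorphism `σ` of `F(ζ)` with
`σ ζ = ζ^i` is exactly one with `σ c = c^i`, i.e. one raising every value of `χ` to the `i`-th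
power. On the other hand, since `g` normalizes `K`, `g⁻¹hg ≡ h^i (mod K)` says exactly that
`x ↦ χ(g⁻¹xg)` is `χ^i`. Comparing the two descriptions at `h` gives both implications. -/

theorem map_pow_eq_pow_of_map_eq_pow {M S : Type*} [Monoid M] [FunLike S M M]
    [MonoidHomClass S M M] (σ : S) {ζ : M} {i : ℕ} (h : σ ζ = ζ ^ i) (a : ℕ) :
    σ (ζ ^ a) = (ζ ^ a) ^ i := by
  rw [map_pow, h, ← pow_mul, ← pow_mul, mul_comm]

theorem IsPrimitiveRoot.map_eq_pow_iff {R S : Type*} [CommRing R] [IsDomain R] [FunLike S R R]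
    [MonoidHomClass S R R] {k : ℕ} [NeZero k] {ζ ξ : R} (hζ : IsPrimitiveRoot ζ k)
    (hξ : IsPrimitiveRoot ξ k) (σ : S) (i : ℕ) : σ ζ = ζ ^ i ↔ σ ξ = ξ ^ i := by
  constructor
  · intro h
    obtain ⟨a, -, rfl⟩ := hζ.eq_pow_of_pow_eq_one hξ.pow_eq_one
    exact map_pow_eq_pow_of_map_eq_pow σ h a
  · intro h
    obtain ⟨a, -, rfl⟩ := hξ.eq_pow_of_pow_eq_one hζ.pow_eq_one
    exact map_pow_eq_pow_of_map_eq_pow σ h a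

namespace MonoidHom

section

variable {H M : Type*} [Group H] [Monoid M] (χ : H →* M) {h : H}

theorem orderOf_apply_mul_card_ker [Finite H] (hgen : ∀ x, ∃ m : ℕ, χ x = χ h ^ m) :
    orderOf (χ h) * Nat.card χ.ker = Nat.card H := by
  have hzpowers : ∀ y : H ⧸ χ.ker, y ∈ Subgroup.zpowers (h : H ⧸ χ.ker) := by
    intro y
    induction y using QuotientGroup.induction_on with
    | H x =>
      obtain ⟨m, hm⟩ := hgen x
      refine Subgroup.mem_zpowers_iff.mpr ⟨m, ?_⟩
      rw [zpow_natCast, ← QuotientGroup.mk_pow, QuotientGroup.eq, ← χ.eq_iff, map_pow, hm]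
  have horder : orderOf (χ h) = orderOf (h : H ⧸ χ.ker) := by
    refine orderOf_eq_orderOf_iff.mpr fun n => ?_
    rw [← map_pow, ← QuotientGroup.mk_pow, QuotientGroup.eq_one_iff, mem_ker]
  rw [horder, orderOf_eq_card_of_forall_mem_zpowers hzpowers,
    ← Subgroup.card_eq_card_quotient_mul_card_subgroup]

theorem apply_comp_eq_pow (φ : H →* H) (hφ : χ.ker ≤ (χ.comp φ).ker)
    (hgen : ∀ x, ∃ m : ℕ, χ x = χ h ^ m) {j : ℕ} (hj : χ (φ h) = χ h ^ j) (x : H) :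
    χ (φ x) = χ x ^ j := by
  obtain ⟨m, hm⟩ := hgen x
  have hx : χ (φ x) = χ (φ (h ^ m)) :=
    (χ.comp φ).eq_iff.mpr (hφ (χ.eq_iff.mp (by rw [hm, map_pow])))
  rw [hx, map_pow, map_pow, hj, hm, ← pow_mul, ← pow_mul, mul_comm]

end

theorem isPrimitiveRoot_apply {H M : Type*} [Group H] [CommMonoid M] [Finite H] (χ : H →* M)
    {h : H} (hgen : ∀ x, ∃ m : ℕ, χ x = χ h ^ m) {k : ℕ}
    (hk : Nat.card χ.ker * k = Nat.card H) : IsPrimitiveRoot (χ h) k := by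
  rw [← χ.orderOf_apply_mul_card_ker hgen, mul_comm] at hk
  exact IsPrimitiveRoot.iff_orderOf.mpr (Nat.eq_of_mul_eq_mul_right Nat.card_pos hk).symm

variable {G M : Type*} [Group G] [Monoid M] {H K : Subgroup G} (χ : H →* M)

theorem apply_eq_pow_of_inv_pow_mul_mem (hker : χ.ker = K.subgroupOf H) {h x : H} {m : ℕ}
    (hm : ((h : G) ^ m)⁻¹ * x ∈ K) : χ x = χ h ^ m := by
  rw [← map_pow, χ.eq_iff, hker, Subgroup.mem_subgroupOf]
  simpa using hm

theorem apply_conj_eq_pow (hker : χ.ker = K.subgroupOf H) {g h : G}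
    (hgH : g ∈ Subgroup.normalizer (H : Set G)) (hgK : g ∈ Subgroup.normalizer (K : Set G))
    (hh : h ∈ H) (hgen : ∀ x, ∃ m : ℕ, χ x = χ ⟨h, hh⟩ ^ m) {i : ℕ}
    (hi : (h ^ i)⁻¹ * (g⁻¹ * h * g) ∈ K) (x : H) :
    χ ⟨g⁻¹ * x * g, (Subgroup.mem_normalizer_iff''.mp hgH x).mp x.2⟩ = χ x ^ i := by
  set φ := (H.normalizerMonoidHom ⟨g, hgH⟩⁻¹).toMonoidHom
  have hφ : ∀ y : H, (φ y : G) = g⁻¹ * y * g := by simp [φ]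
  have hφK : χ.ker ≤ (χ.comp φ).ker := by
    intro y hy
    rw [mem_ker, comp_apply, ← mem_ker, hker, Subgroup.mem_subgroupOf, hφ]
    rw [hker, Subgroup.mem_subgroupOf] at hy
    exact (Subgroup.mem_normalizer_iff''.mp hgK y).mp hy
  have hφh : χ (φ ⟨h, hh⟩) = χ ⟨h, hh⟩ ^ i :=
    χ.apply_eq_pow_of_inv_pow_mul_mem hker (by rwa [hφ])
  rw [← χ.apply_comp_eq_pow φ hφK hgen hφh x]
  exact congrArg χ (Subtype.ext (hφ x).symm)

end MonoidHom

theorem stmt8_general (G : Type*) [Group G] [Fintype G]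
    (F : IntermediateField ℚ ℂ)
    (H K : Subgroup G) (hKH : K ≤ H)
    (k : ℕ) (hk : Nat.card K * k = Nat.card H)
    (ζ : ℂ) (hζ : IsPrimitiveRoot ζ k)
    (χ : H →* ℂ) (hker : ∀ x : H, χ x = 1 ↔ (x : G) ∈ K)
    (hmem : ∀ x : H, χ x ∈ IntermediateField.adjoin F {ζ}) :
    ∀ h : G, h ∈ H → (∀ x ∈ H, ∃ i : ℕ, (h ^ i)⁻¹ * x ∈ K) →
    ∀ g : G, g ∈ Subgroup.normalizer (H : Set G) ⊓ Subgroup.normalizer (K : Set G) →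
      ((∃ σ : IntermediateField.adjoin F {ζ} ≃ₐ[F] IntermediateField.adjoin F {ζ},
          ∀ (x : G) (hx : x ∈ H) (hgx : g * x * g⁻¹ ∈ H),
            χ ⟨g * x * g⁻¹, hgx⟩ = σ ⟨χ ⟨x, hx⟩, hmem ⟨x, hx⟩⟩) ↔
       (∃ (i : ℕ) (σ : IntermediateField.adjoin F {ζ} ≃ₐ[F] IntermediateField.adjoin F {ζ}),
          σ ⟨ζ, IntermediateField.mem_adjoin_simple_self F ζ⟩ =
            ⟨ζ, IntermediateField.mem_adjoin_simple_self F ζ⟩ ^ i ∧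
          (h ^ i)⁻¹ * (g⁻¹ * h * g) ∈ K)) := by
  intro h hh hgen g hg
  obtain ⟨hgH, hgK⟩ := Subgroup.mem_inf.mp hg
  set χE := χ.codRestrict (adjoin F {ζ}) hmem
  have hkerE : χE.ker = K.subgroupOf H := by
    ext x
    rw [MonoidHom.mem_ker, Subgroup.mem_subgroupOf, ← hker]
    exact Subtype.ext_iff
  set c := χE ⟨h, hh⟩
  have hpow : ∀ x, ∃ m : ℕ, χE x = c ^ m := fun x =>
    (hgen x x.2).imp fun _ => χE.apply_eq_pow_of_inv_pow_mul_mem hkerE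
  have hc : IsPrimitiveRoot c k := χE.isPrimitiveRoot_apply hpow (by
    rw [hkerE, Nat.card_congr (Subgroup.subgroupOfEquivOfLe hKH).toEquiv, hk])
  have : NeZero k := ⟨right_ne_zero_of_mul (hk ▸ Nat.card_pos.ne')⟩
  have hζE : IsPrimitiveRoot (⟨ζ, mem_adjoin_simple_self F ζ⟩ : adjoin F {ζ}) k :=
    IsPrimitiveRoot.coe_submonoidClass_iff.mp hζ
  constructor
  · rintro ⟨σ, hσ⟩
    have hgh : g⁻¹ * h * g ∈ H := (Subgroup.mem_normalizer_iff''.mp hgH h).mp hh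
    obtain ⟨j, hj⟩ := hgen _ hgh
    refine ⟨j, σ.symm, (hζE.map_eq_pow_iff hc σ.symm j).mpr (σ.symm_apply_eq.mpr ?_), hj⟩
    rw [← χE.apply_eq_pow_of_inv_pow_mul_mem hkerE (x := ⟨_, hgh⟩) hj]
    have hconj : (⟨g * (g⁻¹ * h * g) * g⁻¹, by group; exact hh⟩ : H) = ⟨h, hh⟩ :=
      Subtype.ext (by group)
    show χE ⟨h, hh⟩ = _
    rw [← hconj]
    exact Subtype.ext (hσ _ hgh _)
  · rintro ⟨i, σ, hσζ, hi⟩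
    have hσ : ∀ x, σ (χE x) = χE x ^ i := fun x => by
      obtain ⟨m, hm⟩ := hpow x
      rw [hm]
      exact map_pow_eq_pow_of_map_eq_pow σ ((hζE.map_eq_pow_iff hc σ i).mp hσζ) m
    refine ⟨σ.symm, fun x hx hgx => congrArg Subtype.val
      ((σ.eq_symm_apply (x := χE ⟨x, hx⟩) (y := χE ⟨g * x * g⁻¹, hgx⟩)).mpr ?_)⟩
    rw [hσ, ← χE.apply_conj_eq_pow hkerE hgH hgK hh hpow hi]
    exact congrArg χE (Subtype.ext (by group))

/-- let `K ⊴ H ≤ G` with `H/K` cyclic of order `k`, and let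
`N = N_G(H) ∩ N_G(K)` act on the Galois orbits of faithful characters of `H/K` by
conjugation.  For any faithful character `χ` of `H/K` (realized as a character of `H`
with kernel `K` and values in `F(ζ_k)`) representing an orbit `C`, and any generator
`hK` of `H/K`, an element `g ∈ N` stabilizes `C` (i.e. `χ^g = σ∘χ` for some
`σ ∈ Gal(F(ζ_k)/F)`) iff `g⁻¹hgK = h^iK` for some `i ∈ I_k(F)` (i.e. some `i` with
`σ(ζ_k) = ζ_k^i` for some `σ ∈ Gal(F(ζ_k)/F)`).  Since `χ` and the generator `h` are
arbitrary, the stabilizer is independent of the choice of the orbit `C` and of `h`. -/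
theorem stmt8 (G : Type*) [Group G] [Fintype G]
    (F : IntermediateField ℚ ℂ) [FiniteDimensional ℚ F]
    (H K : Subgroup G) (hKH : K ≤ H) (hKnormH : ∀ x ∈ H, ∀ y ∈ K, x * y * x⁻¹ ∈ K)
    (k : ℕ) (hk : Nat.card K * k = Nat.card H)
    (ζ : ℂ) (hζ : IsPrimitiveRoot ζ k)
    (χ : H →* ℂ) (hker : ∀ x : H, χ x = 1 ↔ (x : G) ∈ K)
    (hmem : ∀ x : H, χ x ∈ IntermediateField.adjoin F {ζ}) :
    ∀ h : G, h ∈ H → (∀ x ∈ H, ∃ i : ℕ, (h ^ i)⁻¹ * x ∈ K) →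
    ∀ g : G, g ∈ Subgroup.normalizer (H : Set G) ⊓ Subgroup.normalizer (K : Set G) →
      ((∃ σ : IntermediateField.adjoin F {ζ} ≃ₐ[F] IntermediateField.adjoin F {ζ},
          ∀ (x : G) (hx : x ∈ H) (hgx : g * x * g⁻¹ ∈ H),
            χ ⟨g * x * g⁻¹, hgx⟩ = σ ⟨χ ⟨x, hx⟩, hmem ⟨x, hx⟩⟩) ↔
       (∃ (i : ℕ) (σ : IntermediateField.adjoin F {ζ} ≃ₐ[F] IntermediateField.adjoin F {ζ}),
          σ ⟨ζ, IntermediateField.mem_adjoin_simple_self F ζ⟩ =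
            ⟨ζ, IntermediateField.mem_adjoin_simple_self F ζ⟩ ^ i ∧
          (h ^ i)⁻¹ * (g⁻¹ * h * g) ∈ K)) :=
  stmt8_general G F H K hKH k hk ζ hζ χ hker hmem
end

section
/- Let G be a finite strongly monomial group of exponent e and F a number field. If [F(ζ_e) : F] = φ(e), then the number of simple components of FG equals the number of simple components of ℚG. -/
set_option synthInstance.maxHeartbeats 1000000
set_option maxHeartbeats 1000000

open IntermediateField
open scoped Classical

/-- The number of simple components of a semisimple ring, counted as the number of
primitive central idempotents. -/
noncomputable def numSimple (R : Type*) [Ring R] : ℕ :=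
  Nat.card {e : R // IsPrimitiveCentralIdempotent e}

noncomputable def hatQ {G : Type*} [Group G] [Fintype G] (A : Subgroup G) :
    MonoidAlgebra ℚ G :=
  (Nat.card A : ℚ)⁻¹ • ∑ a : A, MonoidAlgebra.single (a : G) (1 : ℚ)

/-- `e = ε(H,K) = K̂ ∏_{M/K ∈ ℳ(H/K)} (1 - M̂) ∈ ℚG`. -/
def IsEps {G : Type*} [Group G] [Fintype G] (H K : Subgroup G)
    (e : MonoidAlgebra ℚ G) : Prop :=
  ∃ l : List (Subgroup G), l.Nodup ∧
    (∀ M : Subgroup G, M ∈ l ↔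
      (K < M ∧ M ≤ H ∧ ∀ M' : Subgroup G, K < M' → M' ≤ H → M' ≤ M → M' = M)) ∧
    e = hatQ K * (l.map (fun M => 1 - hatQ M)).prod

/-- `(H,K)` is a strong Shoda pair of `G`. -/
def IsStrongShodaPair {G : Type*} [Group G] [Fintype G] (H K : Subgroup G) : Prop :=
  K ≤ H ∧ H ≤ Subgroup.normalizer (K : Set G) ∧
  (∀ n ∈ Subgroup.normalizer (K : Set G), ∀ h ∈ H, n * h * n⁻¹ ∈ H) ∧
  (∃ c ∈ H, ∀ x ∈ H, ∃ i : ℕ, (c ^ i)⁻¹ * x ∈ K) ∧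
  (∀ B : Subgroup G, H ≤ B → B ≤ Subgroup.normalizer (K : Set G) →
    (∀ x ∈ B, ∀ y ∈ B, x * y * x⁻¹ * y⁻¹ ∈ K) → B = H) ∧
  (∀ e : MonoidAlgebra ℚ G, IsEps H K e → ∀ g : G, g ∉ Subgroup.normalizer (K : Set G) →
    e * (MonoidAlgebra.single g (1 : ℚ) * e * MonoidAlgebra.single g⁻¹ (1 : ℚ)) = 0)

/-- `G` is strongly monomial: every irreducible complex character of `G` is induced from a
linear character `ψ` of a subgroup `H` with kernel `K`, for a strong Shoda pair `(H,K)`. -/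
def IsStronglyMonomial (G : Type) [Group G] [Fintype G] : Prop :=
  ∀ V : FDRep ℂ G, CategoryTheory.Simple V →
    ∃ (H K : Subgroup G) (_ : IsStrongShodaPair H K) (ψ : H →* ℂ),
      (∀ x : H, ψ x = 1 ↔ (x : G) ∈ K) ∧
      ∀ g : G, FDRep.character V g =
        (Nat.card H : ℂ)⁻¹ *
          ∑ x : G, if hx : x * g * x⁻¹ ∈ H then ψ ⟨x * g * x⁻¹, hx⟩ else 0

/-! The coefficients of a central idempotent `x` of `ℂG` lie in `ℚ(ζ_e)`: the coefficient at `g`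
is `|G|⁻¹` times the trace of left multiplication by `y = x g⁻¹` on `ℂG`, and `y ^ (e + 1) = y`
forces every eigenvalue of that map to be `0` or a power of `ζ_e`. The degree condition makes `F`
and `ℚ(ζ_e)` linearly disjoint, so `F ∩ ℚ(ζ_e) = ℚ` and every central idempotent of `FG` already
lies in `ℚG`. Hence `ℚG → FG` restricts to a bijection between primitive central idempotents. -/

open MonoidAlgebra

theorem IntermediateField.inf_adjoin_simple_eq_bot {k L : Type*} [Field k] [Field L]
    [Algebra k L] (F : IntermediateField k L) [FiniteDimensional k F] {α : L}
    (hα : IsIntegral k α) (h : Module.finrank F F⟮α⟯ = Module.finrank k k⟮α⟯) :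
    F ⊓ k⟮α⟯ = ⊥ := by
  have := adjoin.finiteDimensional hα
  refine (LinearDisjoint.of_finrank_sup ?_).inf_eq_bot
  rw [← restrictScalars_adjoin_eq_sup, ← h]
  exact (Module.finrank_mul_finrank k F F⟮α⟯).symm

theorem Matrix.trace_mem_adjoin_of_pow_succ_eq_self {ι : Type*} [Fintype ι] [DecidableEq ι]
    {n : ℕ} [NeZero n] {ζ : ℂ} (hζ : IsPrimitiveRoot ζ n) {A : Matrix ι ι ℂ}
    (hA : A ^ (n + 1) = A) : A.trace ∈ ℚ⟮ζ⟯ := by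
  rw [Matrix.trace_eq_sum_roots_charpoly]
  refine IntermediateField.multiset_sum_mem _ _ fun μ hμ => ?_
  have hspec : μ ∈ spectrum ℂ A :=
    Matrix.mem_spectrum_iff_isRoot_charpoly.2 (Polynomial.isRoot_of_mem_roots hμ)
  have : Nontrivial (Matrix ι ι ℂ) := by
    rcases subsingleton_or_nontrivial (Matrix ι ι ℂ) with h | h
    · simp [spectrum.of_subsingleton] at hspec
    · exact h
  have hμ : μ ^ (n + 1) = μ := by
    have := spectrum.subset_polynomial_aeval A (Polynomial.X ^ (n + 1) - Polynomial.X)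
      ⟨μ, hspec, rfl⟩
    simpa [hA, spectrum.zero_eq, sub_eq_zero] using this
  rcases eq_or_ne μ 0 with rfl | hμ0
  · exact zero_mem _
  · obtain ⟨i, -, rfl⟩ :=
      hζ.eq_pow_of_pow_eq_one (mul_left_cancel₀ hμ0 (by rw [← pow_succ', hμ, mul_one]))
    exact pow_mem (mem_adjoin_simple_self ℚ ζ) i

namespace MonoidAlgebra

variable {k G : Type*}

theorem mem_center_iff_forall_commute_single [CommSemiring k] [Monoid G]
    {x : MonoidAlgebra k G} :
    x ∈ Set.center (MonoidAlgebra k G) ↔ ∀ g : G, Commute (single g 1) x := by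
  refine ⟨fun hx g => Semigroup.mem_center_iff.1 hx _, fun hx => ?_⟩
  suffices ∀ y, Commute y x from Semigroup.mem_center_iff.2 this
  intro y
  induction y using MonoidAlgebra.induction_linear with
  | zero => exact Commute.zero_left x
  | add y z hy hz => exact hy.add_left hz
  | single g r => simpa only [smul_single', mul_one] using (hx g).smul_left r

section MapRingHom

variable [Monoid G] {S : Type*}

theorem mapRingHom_injective [Semiring k] [Semiring S] {f : k →+* S}
    (hf : Function.Injective f) : Function.Injective (mapRingHom G f) :=
  map_injective f.toAddMonoidHom hf

theorem mapRingHom_mem_center_iff [CommSemiring k] [CommSemiring S] {f : k →+* S}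
    (hf : Function.Injective f) {x : MonoidAlgebra k G} :
    mapRingHom G f x ∈ Set.center (MonoidAlgebra S G) ↔ x ∈ Set.center (MonoidAlgebra k G) := by
  simp only [mem_center_iff_forall_commute_single]
  refine forall_congr' fun g => ?_
  rw [show single g (1 : S) = mapRingHom G f (single g 1) by simp]
  refine ⟨fun h => mapRingHom_injective hf ?_, fun h => h.map _⟩
  simpa only [map_mul] using h.eq

theorem mem_range_mapRingHom [Semiring k] [Semiring S] [Finite G] (f : k →+* S)
    {x : MonoidAlgebra S G} (hx : ∀ g, x.coeff g ∈ Set.range f) :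
    x ∈ Set.range (mapRingHom G f) := by
  choose q hq using hx
  refine ⟨ofCoeff (Finsupp.equivFunOnFinite.symm q), MonoidAlgebra.ext (Finsupp.ext fun g => ?_)⟩
  simp [hq]

end MapRingHom

theorem trace_leftMulMatrix_basis [CommRing k] [Group G] [Fintype G] (y : MonoidAlgebra k G) :
    (Algebra.leftMulMatrix (basis G k) y).trace = Fintype.card G * y.coeff 1 := by
  simp [Matrix.trace, Algebra.leftMulMatrix_eq_repr_mul, basis]

theorem coeff_mem_adjoin_of_isIdempotentElem [Group G] [Fintype G]
    {n : ℕ} [NeZero n] (hG : ∀ g : G, g ^ n = 1) {ζ : ℂ} (hζ : IsPrimitiveRoot ζ n)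
    {x : MonoidAlgebra ℂ G} (hx : IsIdempotentElem x) (hxc : x ∈ Set.center (MonoidAlgebra ℂ G))
    (g : G) : x.coeff g ∈ ℚ⟮ζ⟯ := by
  set y := x * single g⁻¹ 1
  have hcomm : Commute x (single g⁻¹ 1) := (Semigroup.mem_center_iff.1 hxc _).symm
  have hy : y ^ (n + 1) = y := by
    rw [hcomm.mul_pow, hx.pow_succ_eq, single_pow, pow_succ, hG, one_mul, one_pow]
  have htrace := Matrix.trace_mem_adjoin_of_pow_succ_eq_self hζ
    (A := Algebra.leftMulMatrix (basis G ℂ) y) (by rw [← map_pow, hy])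
  rw [trace_leftMulMatrix_basis] at htrace
  simpa [y, Fintype.card_ne_zero] using
    mul_mem (inv_mem (IntermediateField.natCast_mem ℚ⟮ζ⟯ (Fintype.card G))) htrace

theorem mem_range_mapRingHom_of_isIdempotentElem [Group G] [Fintype G]
    {n : ℕ} [NeZero n] (hG : ∀ g : G, g ^ n = 1) {ζ : ℂ} (hζ : IsPrimitiveRoot ζ n)
    {F : IntermediateField ℚ ℂ} (hF : F ⊓ ℚ⟮ζ⟯ = ⊥) {c : MonoidAlgebra F G}
    (hc : IsIdempotentElem c) (hcc : c ∈ Set.center (MonoidAlgebra F G)) :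
    c ∈ Set.range (mapRingHom G (algebraMap ℚ F)) := by
  refine mem_range_mapRingHom _ fun g => ?_
  have hmem : (c.coeff g : ℂ) ∈ F ⊓ ℚ⟮ζ⟯ := by
    refine ⟨(c.coeff g).2, ?_⟩
    simpa using coeff_mem_adjoin_of_isIdempotentElem hG hζ
      (hc.map (mapRingHom G (algebraMap F ℂ)))
      ((mapRingHom_mem_center_iff (algebraMap F ℂ).injective).2 hcc) g
  rw [hF, mem_bot] at hmem
  obtain ⟨q, hq⟩ := hmem
  exact ⟨q, Subtype.ext hq⟩

end MonoidAlgebra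

section Transfer

variable {R S : Type*} [Ring R] [Ring S] {f : R →+* S} (hf : Function.Injective f)
  (hcenter : ∀ x, f x ∈ Set.center S ↔ x ∈ Set.center R)
  (hrange : ∀ c : S, IsIdempotentElem c → c ∈ Set.center S → c ∈ Set.range f)
include hf hcenter hrange

theorem isPrimitiveCentralIdempotent_map_iff {x : R} :
    IsPrimitiveCentralIdempotent (f x) ↔ IsPrimitiveCentralIdempotent x := by
  simp only [IsPrimitiveCentralIdempotent]
  refine and_congr (map_ne_zero_iff f hf) <| and_congr (by rw [← map_mul, hf.eq_iff]) <|
    and_congr (hcenter x) ⟨fun h c hc hcc hxc => ?_, fun h c hc hcc hxc => ?_⟩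
  · simpa [hf.eq_iff, map_eq_zero_iff f hf] using
      h (f c) (by rw [← map_mul, hc]) ((hcenter c).2 hcc) (by rw [← map_mul, hxc])
  · obtain ⟨d, rfl⟩ := hrange c hc hcc
    simpa [hf.eq_iff, map_eq_zero_iff f hf] using
      h d (hf (by rw [map_mul, hc])) ((hcenter d).1 hcc) (hf (by rw [map_mul, hxc]))

theorem numSimple_eq_of_injective_of_mem_range : numSimple S = numSimple R := by
  refine (Nat.card_congr (Equiv.ofBijective
      (fun x => ⟨f x, (isPrimitiveCentralIdempotent_map_iff hf hcenter hrange).2 x.2⟩)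
      ⟨?_, ?_⟩)).symm
  · exact fun x y hxy => Subtype.ext (hf (congrArg Subtype.val hxy))
  · rintro ⟨c, hc⟩
    obtain ⟨d, rfl⟩ := hrange c hc.2.1 hc.2.2.1
    exact ⟨⟨d, (isPrimitiveCentralIdempotent_map_iff hf hcenter hrange).1 hc⟩, rfl⟩

end Transfer

theorem stmt13_general (G : Type) [Group G] [Fintype G]
    (F : IntermediateField ℚ ℂ) [FiniteDimensional ℚ F]
    (e : ℕ) (he : e = Monoid.exponent G) (ζ : ℂ) (hζ : IsPrimitiveRoot ζ e)
    (hdeg : Module.finrank F (IntermediateField.adjoin F {ζ}) = Nat.totient e) :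
    numSimple (MonoidAlgebra F G) = numSimple (MonoidAlgebra ℚ G) := by
  have : NeZero e := ⟨he ▸ Monoid.exponent_ne_zero_of_finite⟩
  have hG : ∀ g : G, g ^ e = 1 := he ▸ Monoid.pow_exponent_eq_one
  have hζint : IsIntegral ℚ ζ := (hζ.isIntegral (NeZero.pos e)).tower_top
  have hF : F ⊓ ℚ⟮ζ⟯ = ⊥ := by
    refine inf_adjoin_simple_eq_bot F hζint ?_
    rw [hdeg, adjoin.finrank hζint, ← Polynomial.cyclotomic_eq_minpoly_rat hζ (NeZero.pos e),
      Polynomial.natDegree_cyclotomic]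
  have hinj := (algebraMap ℚ F).injective
  exact numSimple_eq_of_injective_of_mem_range (mapRingHom_injective hinj)
    (fun _ => mapRingHom_mem_center_iff hinj)
    (fun _ hc hcc => mem_range_mapRingHom_of_isIdempotentElem hG hζ hF hc hcc)

/-- let `G` be a finite strongly monomial group of exponent `e` and `F` a
number field.  If `[F(ζ_e) : F] = φ(e)`, then `FG` and `ℚG` have the same number of simple
components. -/
theorem stmt13 (G : Type) [Group G] [Fintype G] (hG : IsStronglyMonomial G)
    (F : IntermediateField ℚ ℂ) [FiniteDimensional ℚ F]
    (e : ℕ) (he : e = Monoid.exponent G) (ζ : ℂ) (hζ : IsPrimitiveRoot ζ e)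
    (hdeg : Module.finrank F (IntermediateField.adjoin F {ζ}) = Nat.totient e) :
    numSimple (MonoidAlgebra F G) = numSimple (MonoidAlgebra ℚ G) :=
  stmt13_general G F e he ζ hζ hdeg
end

section
/- Let G = ⟨a,b | a^m = 1, b^n = a^t, b⁻¹ab = a^r⟩ be a finite metacyclic group with r^n ≡ 1 mod m and m | t(r−1). For each divisor d of o_m(r), let G_d = ⟨a, b^d⟩. If (G_d, K) is a pair with K ≤ G_d, G_d/K cyclic, and d = min{x dividing o_m(r) : a^{r^x − 1} ∈ K}, then K is normal in G_d and N_G(K) ⊇ G_d. -/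
/-!
The element `c = a^(r^d) a⁻¹ = ⁅b^{-d}, a⁆` is a power of `a`, so `⟨c⟩` is normalised by `a`,
and by `b` because conjugation by `b` acts on `⟨a⟩` as the `r`-th power map; hence `⟨c⟩` is normal
in `G = ⟨a, b⟩`. Modulo `⟨c⟩` the generators `a` and `b^d` of `G_d` commute, so `G_d / ⟨c⟩` is
abelian and every commutator of `G_d` lies in `⟨c⟩ ≤ K`. A subgroup of `G_d` containing all its
commutators is normal in `G_d`.
-/

open Subgroup
open scoped commutatorElement

section

variable {G : Type*} [Group G]

theorem conj_zpow_eq_zpow_mul {a b : G} {s : ℤ} (hconj : b⁻¹ * a * b = a ^ s) (j : ℤ) :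
    b⁻¹ * a ^ j * b = a ^ (s * j) := by
  have h : (b⁻¹ * a * b⁻¹⁻¹) ^ j = b⁻¹ * a ^ j * b⁻¹⁻¹ := conj_zpow
  rw [inv_inv] at h
  rw [← h, hconj, ← zpow_mul]

theorem conj_pow_eq_zpow_pow {a b : G} {s : ℤ} (hconj : b⁻¹ * a * b = a ^ s) (d : ℕ) :
    (b ^ d)⁻¹ * a * b ^ d = a ^ (s ^ d) := by
  induction d with
  | zero => simp
  | succ k ih =>
    calc (b ^ (k + 1))⁻¹ * a * b ^ (k + 1) = b⁻¹ * ((b ^ k)⁻¹ * a * b ^ k) * b := by group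
      _ = a ^ (s ^ (k + 1)) := by rw [ih, conj_zpow_eq_zpow_mul hconj, pow_succ, mul_comm]

theorem normal_zpowers_zpow_of_conj_eq_zpow [Finite G] {a b : G} {s : ℤ}
    (hgen : closure {a, b} = ⊤) (hconj : b⁻¹ * a * b = a ^ s) (k : ℤ) :
    (zpowers (a ^ k)).Normal := by
  rw [← normalizer_eq_top_iff, eq_top_iff, ← hgen, closure_le]
  have ha : a ∈ normalizer (zpowers (a ^ k) : Set G) := by
    refine mem_normalizer_fintype ?_
    rintro _ ⟨i, rfl⟩
    rw [(((Commute.refl a).zpow_right k).zpow_right i).eq, mul_inv_cancel_right]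
    exact ⟨i, rfl⟩
  have hb : b⁻¹ ∈ normalizer (zpowers (a ^ k) : Set G) := by
    refine mem_normalizer_fintype ?_
    rintro _ ⟨i, rfl⟩
    refine ⟨s * i, ?_⟩
    simp only [inv_inv, ← zpow_mul, conj_zpow_eq_zpow_mul hconj]
    ring_nf
  rintro x (rfl | rfl)
  · exact ha
  · simpa using inv_mem hb

theorem commutatorElement_mem_of_mem_closure_pair {N : Subgroup G} [N.Normal] {x y g h : G}
    (hxy : ⁅x, y⁆ ∈ N) (hg : g ∈ closure {x, y}) (hh : h ∈ closure {x, y}) : ⁅g, h⁆ ∈ N := by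
  set π := QuotientGroup.mk' N
  have hmap : (closure {x, y}).map π = closure {π x, π y} := by
    rw [MonoidHom.map_closure, Set.image_pair]
  have hcomm : π x * π y = π y * π x := by
    rw [← commute_iff_eq, ← commutatorElement_eq_one_iff_commute, ← map_commutatorElement]
    exact (QuotientGroup.eq_one_iff _).mpr hxy
  have : IsMulCommutative (closure {π x, π y}) := by
    refine isMulCommutative_closure ?_
    rintro u (rfl | rfl) v (rfl | rfl) <;> first | rfl | exact hcomm | exact hcomm.symm
  have hgh : π g * π h = π h * π g := by
    refine setLike_mul_comm (s := closure {π x, π y}) ?_ ?_ <;> rw [← hmap] <;>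
      exact mem_map_of_mem π ‹_›
  rw [← QuotientGroup.eq_one_iff, ← QuotientGroup.mk'_apply, map_commutatorElement,
    commutatorElement_eq_one_iff_commute]
  exact hgh

end

theorem stmt18_general (G : Type*) [Group G] [Fintype G] (a b : G) (r : ℕ)
    (hconj : b⁻¹ * a * b = a ^ r)
    (hgen : Subgroup.closure {a, b} = ⊤)
    (d : ℕ)
    (K : Subgroup G) (hKGd : K ≤ Subgroup.closure {a, b ^ d})
    (hdK : a ^ (r ^ d) * a⁻¹ ∈ K) :
    (∀ g ∈ Subgroup.closure {a, b ^ d}, ∀ x ∈ K, g * x * g⁻¹ ∈ K) ∧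
      Subgroup.closure {a, b ^ d} ≤ Subgroup.normalizer (K : Set G) := by
  have hconj' : b⁻¹ * a * b = a ^ (r : ℤ) := by rwa [zpow_natCast]
  have hc : ⁅(b ^ d)⁻¹, a⁆ = a ^ ((r : ℤ) ^ d - 1) := by
    rw [commutatorElement_def, inv_inv, conj_pow_eq_zpow_pow hconj', zpow_sub_one]
  have hcK : ⁅(b ^ d)⁻¹, a⁆ ∈ K := by
    rwa [hc, zpow_sub_one, ← Nat.cast_pow, zpow_natCast]
  have hD := normal_zpowers_zpow_of_conj_eq_zpow hgen hconj' ((r : ℤ) ^ d - 1)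
  have hgen_comm : ⁅a, b ^ d⁆ ∈ zpowers (a ^ ((r : ℤ) ^ d - 1)) := by
    have h := hD.conj_mem ⁅(b ^ d)⁻¹, a⁆ (by rw [hc]; exact mem_zpowers _) (b ^ d)
    simpa only [commutatorElement_def, inv_inv, mul_assoc, mul_inv_cancel_left] using h
  have hconjK : ∀ g ∈ closure {a, b ^ d}, ∀ x ∈ K, g * x * g⁻¹ ∈ K := by
    intro g hg x hx
    have hgx : ⁅g, x⁆ ∈ K := zpowers_le.mpr (hc ▸ hcK)
      (commutatorElement_mem_of_mem_closure_pair hgen_comm hg (hKGd hx))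
    simpa only [commutatorElement_def, inv_mul_cancel_right] using K.mul_mem hgx hx
  exact ⟨hconjK, fun g hg => mem_normalizer_fintype (hconjK g hg)⟩

/-- let `G = ⟨a,b | a^m = 1, b^n = a^t, b⁻¹ab = a^r⟩` be a finite metacyclic
group with `r^n ≡ 1 mod m` and `m ∣ t(r−1)`.  For a divisor `d` of `o_m(r)`, set
`G_d = ⟨a, b^d⟩`.  If `(G_d, K)` is a pair with `K ≤ G_d`, `G_d/K` cyclic, and
`d = min{x ∣ o_m(r) : a^{r^x − 1} ∈ K}`, then `K` is normal in `G_d` and `N_G(K) ⊇ G_d`. -/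
theorem stmt18 (G : Type*) [Group G] [Fintype G] (a b : G) (m n t r : ℕ)
    (hm : 0 < m) (hn : 0 < n) (hr : 0 < r)
    (ham : a ^ m = 1) (hbn : b ^ n = a ^ t) (hconj : b⁻¹ * a * b = a ^ r)
    (hgen : Subgroup.closure {a, b} = ⊤)
    (hrn : (r : ZMod m) ^ n = 1) (hmt : m ∣ t * (r - 1))
    (d : ℕ) (hd : d ∣ orderOf ((r : ZMod m)))
    (K : Subgroup G) (hKGd : K ≤ Subgroup.closure {a, b ^ d})
    (hcyc : ∃ c ∈ Subgroup.closure {a, b ^ d},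
      ∀ x ∈ Subgroup.closure {a, b ^ d}, ∃ i : ℤ, (c ^ i)⁻¹ * x ∈ K)
    (hdK : a ^ (r ^ d) * a⁻¹ ∈ K)
    (hdmin : ∀ x : ℕ, x ∣ orderOf ((r : ZMod m)) → a ^ (r ^ x) * a⁻¹ ∈ K → d ≤ x) :
    (∀ g ∈ Subgroup.closure {a, b ^ d}, ∀ x ∈ K, g * x * g⁻¹ ∈ K) ∧
      Subgroup.closure {a, b ^ d} ≤ Subgroup.normalizer (K : Set G) :=
  stmt18_general G a b r hconj hgen d K hKGd hdK
end
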